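/- arXiv:2406.08770 — 7 statements merged into one kernel-verified Lean document; each statement's English description precedes it below -/
import Mathlib

section
/- For every integer k ≥ 1 and every connected graph G of order n ≥ 2, there exists a spanning tree T of G such that γₖᵗ(T) = γₖᵗ(G). -/
open SimpleGraph

/-- `S` is a total (distance) `k`-dominating set of `G`: every vertex `v` is within
distance `k` of some vertex of `S` different from `v`. -/
def TotalKDomSet {V : Type*} (G : SimpleGraph V) (k : ℕ) (S : Set V) : Prop :=
  ∀ v : V, ∃ w ∈ S, w ≠ v ∧ G.Reachable v w ∧ G.dist v w ≤ k

/-- The total (distance) `k`-domination number `γₖᵗ(G)`. -/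
noncomputable def totalKDomNum {V : Type*} (G : SimpleGraph V) (k : ℕ) : ℕ :=
  sInf {m | ∃ S : Set V, TotalKDomSet G k S ∧ S.ncard = m}

section Aux

variable {V : Type*}



/-- Adding an edge between two vertices not reachable from each other preserves acyclicity. -/
lemma lemA {H : SimpleGraph V} (hH : H.IsAcyclic) {x y : V} (hxy : x ≠ y)
    (hr : ¬ H.Reachable x y) : (H ⊔ fromEdgeSet {s(x,y)}).IsAcyclic := by
  intro v c hc
  by_cases he : s(x,y) ∈ c.edges
  · have hb : (H ⊔ fromEdgeSet {s(x,y)}).IsBridge s(x,y) := by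
      rw [isBridge_iff]
      · intro hreach
        apply hr
        refine hreach.mono ?_
        intro a b hab
        rcases hab with ⟨hab1 | hab2, hnot⟩
        · exact hab1
        · exact absurd hab2 hnot
    exact ((isBridge_iff_adj_and_forall_cycle_notMem (c.edges_subset_edgeSet he)).mp hb) c hc he
  · apply hH (c.transfer H ?_) (hc.transfer _)
    intro e hec
    have := c.edges_subset_edgeSet hec
    rw [edgeSet_sup] at this
    rcases this with h1 | h2
    · exact h1
    · rw [edgeSet_fromEdgeSet] at h2
      rcases h2 with ⟨h2, -⟩
      simp only [Set.mem_singleton_iff] at h2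
      exact absurd (h2 ▸ hec) he

/-- A vertex with no incident edges reaches only itself. -/
lemma reach_isolated {H : SimpleGraph V} {v x : V} (h : ∀ u, ¬ H.Adj v u)
    (hr : H.Reachable v x) : x = v := by
  obtain ⟨w⟩ := hr
  cases w with
  | nil => rfl
  | cons h' q => exact absurd h' (h _)

/-- First "crossing" edge along a walk whose endpoints have different colours. -/
lemma exists_cross {G : SimpleGraph V} {α : Sort*} (c : V → α) :
    ∀ {x y : V} (W : G.Walk x y), c x ≠ c y →
    ∃ a b, ∃ (W₁ : G.Walk x a) (W₂ : G.Walk b y), G.Adj a b ∧ c a = c x ∧ c b ≠ c x ∧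
      W₁.length + 1 + W₂.length ≤ W.length := by
  intro x y W
  induction W with
  | nil => intro h; exact absurd rfl h
  | @cons x x' y h q ih =>
    intro hne
    by_cases hc : c x' = c x
    · obtain ⟨a, b, W₁, W₂, hab, ha, hb, hlen⟩ := ih (by rw [hc]; exact hne)
      refine ⟨a, b, Walk.cons h W₁, W₂, hab, ha.trans hc, by rw [← hc]; exact hb, ?_⟩
      simp only [Walk.length_cons]
      omega
    · exact ⟨x, x', Walk.nil, q, h, rfl, hc, by simp [Walk.length_cons]; omega⟩

/-- If `H` is a disconnected subgraph of a connected graph `G`, some `G`-edge joins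
two `H`-components. -/
lemma exists_cross_edge {G H : SimpleGraph V} (hG : G.Connected) (hnc : ¬H.Connected) :
    ∃ a b, G.Adj a b ∧ ¬H.Reachable a b := by
  have hne : Nonempty V := hG.nonempty
  rw [connected_iff] at hnc
  push_neg at hnc
  have hpre : ¬H.Preconnected := fun hp => @IsEmpty.false V (hnc hp) hne.some
  rw [Preconnected] at hpre
  push_neg at hpre
  obtain ⟨x, y, hxy⟩ := hpre
  obtain ⟨W⟩ := hG x y
  have hcxy : H.connectedComponentMk x ≠ H.connectedComponentMk y := by
    intro h; exact hxy (ConnectedComponent.exact h)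
  obtain ⟨a, b, _, _, hab, ha, hb, -⟩ := exists_cross (H.connectedComponentMk) W hcxy
  refine ⟨a, b, hab, fun hre => hb ?_⟩
  rw [← ha]
  exact (ConnectedComponent.sound hre).symm

lemma single_edge_le {G : SimpleGraph V} {a b : V} (hab : G.Adj a b) :
    fromEdgeSet {s(a,b)} ≤ G := by
  intro u w huw
  rw [fromEdgeSet_adj, Set.mem_singleton_iff, Sym2.eq_iff] at huw
  rcases huw.1 with ⟨rfl, rfl⟩ | ⟨rfl, rfl⟩
  · exact hab
  · exact hab.symm

/-- Any acyclic subgraph of a connected graph extends to a spanning tree. -/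
lemma extend_tree_aux [Fintype V] {G : SimpleGraph V} (hG : G.Connected) :
    ∀ (n : ℕ) (H : SimpleGraph V), (G.edgeSet \ H.edgeSet).ncard ≤ n → H ≤ G → H.IsAcyclic →
    ∃ T, H ≤ T ∧ T ≤ G ∧ T.IsTree := by
  intro n
  induction n with
  | zero =>
    intro H hcard hHG hacy
    by_cases hc : H.Connected
    · exact ⟨H, le_rfl, hHG, ⟨hc, hacy⟩⟩
    · exfalso
      obtain ⟨a, b, hab, hre⟩ := exists_cross_edge hG hc
      have hmem : s(a,b) ∈ G.edgeSet \ H.edgeSet := by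
        refine ⟨hab, fun h => hre (Adj.reachable h)⟩
      have : 0 < (G.edgeSet \ H.edgeSet).ncard :=
        (Set.ncard_pos (Set.toFinite _)).mpr ⟨_, hmem⟩
      omega
  | succ n ih =>
    intro H hcard hHG hacy
    by_cases hc : H.Connected
    · exact ⟨H, le_rfl, hHG, ⟨hc, hacy⟩⟩
    · obtain ⟨a, b, hab, hre⟩ := exists_cross_edge hG hc
      set H' := H ⊔ fromEdgeSet {s(a,b)} with hH'
      have hH'G : H' ≤ G := sup_le hHG (single_edge_le hab)
      have hacy' : H'.IsAcyclic := lemA hacy hab.ne hre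
      have hss : G.edgeSet \ H'.edgeSet ⊂ G.edgeSet \ H.edgeSet := by
        constructor
        · intro e he
          exact ⟨he.1, fun h => he.2 (edgeSet_mono le_sup_left h)⟩
        · intro hsub
          have hmem : s(a,b) ∈ G.edgeSet \ H.edgeSet :=
            ⟨hab, fun h => hre (Adj.reachable h)⟩
          have := hsub hmem
          apply this.2
          rw [hH', edgeSet_sup]
          right
          rw [edgeSet_fromEdgeSet]
          exact ⟨rfl, by simp [Sym2.isDiag_iff_proj_eq, hab.ne]⟩
      have hlt : (G.edgeSet \ H'.edgeSet).ncard < (G.edgeSet \ H.edgeSet).ncard :=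
        Set.ncard_lt_ncard hss (Set.toFinite _)
      obtain ⟨T, h1, h2, h3⟩ := ih H' (by omega) hH'G hacy'
      exact ⟨T, le_trans le_sup_left h1, h2, h3⟩

lemma extend_tree [Fintype V] {G H : SimpleGraph V} (hG : G.Connected) (hHG : H ≤ G)
    (hacy : H.IsAcyclic) : ∃ T, H ≤ T ∧ T ≤ G ∧ T.IsTree :=
  extend_tree_aux hG _ H le_rfl hHG hacy

open Classical in
/-- Iterated parent map, stopping at `S`. -/
noncomputable def iterAux (S : Set V) (p : V → V) : ℕ → V → V
  | 0, v => v
  | (n+1), v => if v ∈ S then v else iterAux S p n (p v)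

lemma iterAux_pos {S : Set V} {p : V → V} {n : ℕ} {v : V} (h : v ∈ S) :
    iterAux S p (n+1) v = v := by
  simp only [iterAux]; exact if_pos h

lemma iterAux_neg {S : Set V} {p : V → V} {n : ℕ} {v : V} (h : v ∉ S) :
    iterAux S p (n+1) v = iterAux S p n (p v) := by
  simp only [iterAux]; exact if_neg h

/-- Forest of parent edges. -/
def pForest (S : Set V) (p : V → V) : SimpleGraph V :=
  fromEdgeSet {e | ∃ w, w ∉ S ∧ e = s(w, p w)}

lemma pForest_le {G : SimpleGraph V} {S : Set V} {p : V → V}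
    (hadj : ∀ v ∉ S, G.Adj v (p v)) : pForest S p ≤ G := by
  intro u w huw
  rw [pForest, fromEdgeSet_adj] at huw
  obtain ⟨⟨x, hxS, hx⟩, hne⟩ := huw
  rw [Sym2.eq_iff] at hx
  rcases hx with ⟨rfl, rfl⟩ | ⟨rfl, rfl⟩
  · exact hadj u hxS
  · exact (hadj w hxS).symm

section IterLemmas

variable {S : Set V} {p : V → V} {f : V → ℕ}

lemma iter_spec (hp : ∀ v ∉ S, f (p v) + 1 ≤ f v ∧ p v ≠ v) (hf0 : ∀ v, f v = 0 → v ∈ S) :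
    ∀ (n : ℕ) (v : V), f v ≤ n →
      iterAux S p n v ∈ S ∧ ∃ W : (pForest S p).Walk v (iterAux S p n v), W.length ≤ f v := by
  intro n
  induction n with
  | zero =>
    intro v hv
    have hvS := hf0 v (Nat.le_zero.mp hv)
    exact ⟨hvS, Walk.nil, Nat.zero_le _⟩
  | succ n ih =>
    intro v hv
    by_cases hvS : v ∈ S
    · rw [iterAux_pos hvS]
      exact ⟨hvS, Walk.nil, by simp⟩
    · obtain ⟨h1, h2⟩ := hp v hvS
      have hfv : f v ≠ 0 := fun h => hvS (hf0 v h)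
      obtain ⟨hmem, W, hW⟩ := ih (p v) (by omega)
      rw [iterAux_neg hvS]
      refine ⟨hmem, Walk.cons ?_ W, ?_⟩
      · rw [pForest, fromEdgeSet_adj]
        exact ⟨⟨v, hvS, rfl⟩, h2.symm⟩
      · simp only [Walk.length_cons]
        omega

lemma iter_stab (hp : ∀ v ∉ S, f (p v) + 1 ≤ f v ∧ p v ≠ v) (hf0 : ∀ v, f v = 0 → v ∈ S) :
    ∀ (n : ℕ) (v : V), f v ≤ n → iterAux S p (n+1) v = iterAux S p n v := by
  intro n
  induction n with
  | zero =>
    intro v hv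
    have hvS := hf0 v (Nat.le_zero.mp hv)
    rw [iterAux_pos hvS]
    rfl
  | succ n ih =>
    intro v hv
    by_cases hvS : v ∈ S
    · rw [iterAux_pos hvS, iterAux_pos hvS]
    · rw [iterAux_neg hvS, iterAux_neg hvS]
      refine ih (p v) ?_
      have := (hp v hvS).1
      have hfv : f v ≠ 0 := fun h => hvS (hf0 v h)
      omega

variable {k : ℕ}

lemma root_eq_self (hk : 1 ≤ k) {v : V} (hvS : v ∈ S) : iterAux S p k v = v := by
  obtain ⟨m, rfl⟩ := Nat.exists_eq_add_of_le hk
  rw [add_comm]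
  exact iterAux_pos hvS

lemma root_eq_parent (hp : ∀ v ∉ S, f (p v) + 1 ≤ f v ∧ p v ≠ v)
    (hf0 : ∀ v, f v = 0 → v ∈ S) (hfk : ∀ v, f v ≤ k) (hk : 1 ≤ k)
    {v : V} (hvS : v ∉ S) : iterAux S p k v = iterAux S p k (p v) := by
  obtain ⟨m, rfl⟩ := Nat.exists_eq_add_of_le hk
  have h1 : iterAux S p (1 + m) v = iterAux S p m (p v) := by
    rw [add_comm]
    exact iterAux_neg hvS
  rw [h1, add_comm]
  refine (iter_stab hp hf0 m (p v) ?_).symm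
  have := (hp v hvS).1
  have := hfk v
  omega

lemma root_reach (hp : ∀ v ∉ S, f (p v) + 1 ≤ f v ∧ p v ≠ v)
    (hf0 : ∀ v, f v = 0 → v ∈ S) (hfk : ∀ v, f v ≤ k) (hk : 1 ≤ k)
    {a b : V} (hre : (pForest S p).Reachable a b) :
    iterAux S p k a = iterAux S p k b := by
  obtain ⟨W⟩ := hre
  induction W with
  | nil => rfl
  | @cons a c b h q ih =>
    have hac : iterAux S p k a = iterAux S p k c := by
      rw [pForest, fromEdgeSet_adj] at h
      obtain ⟨⟨w, hwS, hw⟩, hne⟩ := h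
      rw [Sym2.eq_iff] at hw
      rcases hw with ⟨rfl, rfl⟩ | ⟨rfl, rfl⟩
      · exact root_eq_parent hp hf0 hfk hk hwS
      · exact (root_eq_parent hp hf0 hfk hk hwS).symm
    exact hac.trans ih

end IterLemmas

/-- Forests of "parent" edges with strictly decreasing potential are acyclic. -/
lemma forestB_acyclic (φ : V → ℕ) (p : V → V) :
    ∀ B : Finset V, (∀ v ∈ B, φ (p v) < φ v) →
    (fromEdgeSet {e | ∃ w ∈ B, e = s(w, p w)}).IsAcyclic := by
  classical
  intro B
  induction B using Finset.strongInduction with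
  | _ B ih =>
    intro hB
    rcases B.eq_empty_or_nonempty with rfl | hne
    · have : {e : Sym2 V | ∃ w ∈ (∅ : Finset V), e = s(w, p w)} = ∅ := by simp
      rw [this, fromEdgeSet_empty]
      exact isAcyclic_bot
    · obtain ⟨v, hvB, hmax⟩ := B.exists_max_image φ hne
      have hsplit : {e : Sym2 V | ∃ w ∈ B, e = s(w, p w)} =
          {e : Sym2 V | ∃ w ∈ B.erase v, e = s(w, p w)} ∪ {s(v, p v)} := by
        ext e
        simp only [Set.mem_setOf_eq, Set.mem_union, Set.mem_singleton_iff]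
        constructor
        · rintro ⟨w, hwB, rfl⟩
          by_cases hwv : w = v
          · subst hwv; right; rfl
          · exact Or.inl ⟨w, Finset.mem_erase.mpr ⟨hwv, hwB⟩, rfl⟩
        · rintro (⟨w, hw, rfl⟩ | rfl)
          · exact ⟨w, Finset.mem_of_mem_erase hw, rfl⟩
          · exact ⟨v, hvB, rfl⟩
      rw [hsplit, fromEdgeSet_union]
      have hpv : p v ≠ v := fun h => lt_irrefl _ (h ▸ hB v hvB)
      have herased : ∀ w ∈ B.erase v, φ (p w) < φ w :=
        fun w hw => hB w (Finset.mem_of_mem_erase hw)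
      have hiso : ∀ u, ¬ (fromEdgeSet {e : Sym2 V | ∃ w ∈ B.erase v, e = s(w, p w)}).Adj v u := by
        intro u hadj
        rw [fromEdgeSet_adj] at hadj
        obtain ⟨⟨w, hw, hweq⟩, hneq⟩ := hadj
        rw [Sym2.eq_iff] at hweq
        rcases hweq with ⟨rfl, rfl⟩ | ⟨hvw, huw⟩
        · exact (Finset.mem_erase.mp hw).1 rfl
        · have h1 := hB w (Finset.mem_of_mem_erase hw)
          have h2 := hmax w (Finset.mem_of_mem_erase hw)
          rw [← hvw] at h1
          omega
      refine lemA (ih (B.erase v) (Finset.erase_ssubset hvB) herased) (Ne.symm hpv) ?_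
      intro hre
      exact hpv (reach_isolated hiso hre)

/-- The key construction: a spanning tree in which `S` stays total `k`-dominating. -/
lemma key [Fintype V] {G : SimpleGraph V} (hG : G.Connected) {k : ℕ} (hk : 1 ≤ k) {S : Set V}
    (hS : TotalKDomSet G k S) : ∃ T, T ≤ G ∧ T.IsTree ∧ TotalKDomSet T k S := by
  classical
  have hne : Nonempty V := hG.nonempty
  set f : V → ℕ := fun v => sInf ((G.dist v) '' S) with hfdef
  have hSne : S.Nonempty := by
    obtain ⟨w, hwS, -⟩ := hS (Classical.arbitrary V)
    exact ⟨w, hwS⟩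
  have hfle : ∀ v, ∀ s ∈ S, f v ≤ G.dist v s := fun v s hs => Nat.sInf_le ⟨s, hs, rfl⟩
  have hfmem : ∀ v, ∃ s ∈ S, f v = G.dist v s := by
    intro v
    obtain ⟨s, hs, heq⟩ := Nat.sInf_mem (hSne.image (G.dist v))
    exact ⟨s, hs, heq.symm⟩
  have hfk : ∀ v, f v ≤ k := by
    intro v
    obtain ⟨w, hwS, -, -, hd⟩ := hS v
    exact (hfle v w hwS).trans hd
  have hf0 : ∀ v, f v = 0 → v ∈ S := by
    intro v hv
    obtain ⟨s, hs, heq⟩ := hfmem v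
    rw [hv] at heq
    rw [hG.dist_eq_zero_iff.mp heq.symm]
    exact hs
  -- parent function
  have hpar : ∀ v, ∃ u, v ∉ S → (G.Adj v u ∧ f u + 1 ≤ f v) := by
    intro v
    by_cases hv : v ∈ S
    · exact ⟨v, fun h => absurd hv h⟩
    · obtain ⟨s, hs, heq⟩ := hfmem v
      have hvs : v ≠ s := fun h => hv (h ▸ hs)
      obtain ⟨W, hW⟩ := (hG v s).exists_walk_length_eq_dist
      cases W with
      | nil => exact absurd rfl hvs
      | @cons _ u _ h q =>
        refine ⟨u, fun _ => ⟨h, ?_⟩⟩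
        have hfu : f u ≤ G.dist u s := hfle u s hs
        have hq : G.dist u s ≤ q.length := SimpleGraph.dist_le q
        simp only [Walk.length_cons] at hW
        omega
  choose p hp using hpar
  have hp' : ∀ v ∉ S, f (p v) + 1 ≤ f v ∧ p v ≠ v := by
    intro v hv
    obtain ⟨h1, h2⟩ := hp v hv
    exact ⟨h2, (h1.ne).symm⟩
  have hpadj : ∀ v ∉ S, G.Adj v (p v) := fun v hv => (hp v hv).1
  -- the forest and roots
  set F : SimpleGraph V := pForest S p with hFdef
  have hFG : F ≤ G := pForest_le hpadj
  have hFacy : F.IsAcyclic := by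
    have hEq : {e : Sym2 V | ∃ w, w ∉ S ∧ e = s(w, p w)} =
        {e : Sym2 V | ∃ w ∈ Finset.univ.filter (fun v => v ∉ S), e = s(w, p w)} := by
      ext e
      simp only [Set.mem_setOf_eq, Finset.mem_filter, Finset.mem_univ, true_and]
    rw [hFdef, pForest, hEq]
    refine forestB_acyclic f p _ ?_
    intro v hv
    rw [Finset.mem_filter] at hv
    have := (hp' v hv.2).1
    omega
  set root : V → V := iterAux S p k with hrootdef
  have hroot_mem : ∀ v, root v ∈ S := fun v => (iter_spec hp' hf0 k v (hfk v)).1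
  have hroot_walk : ∀ v, ∃ W : F.Walk v (root v), W.length ≤ f v :=
    fun v => (iter_spec hp' hf0 k v (hfk v)).2
  have hroot_self : ∀ v ∈ S, root v = v := fun v hv => root_eq_self hk hv
  have hroot_reach : ∀ {a b : V}, F.Reachable a b → root a = root b :=
    fun hre => root_reach hp' hf0 hfk hk hre
  -- processing S to connect components
  have main : ∀ A : Finset V, ↑A ⊆ S → ∃ K : Set (Sym2 V),
      (∀ e ∈ K, ∃ x y, e = s(x,y) ∧ G.Adj x y ∧ root x ≠ root y ∧ f x + 1 + f y ≤ k) ∧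
      (F ⊔ fromEdgeSet K).IsAcyclic ∧
      (∀ s ∈ A, ∃ x y, s(x,y) ∈ K ∧ G.Adj x y ∧ root x ≠ root y ∧
        f x + 1 + f y ≤ k ∧ (root x = s ∨ root y = s)) := by
    intro A
    induction A using Finset.induction_on with
    | empty =>
      intro _
      refine ⟨∅, by simp, ?_, by simp⟩
      rw [fromEdgeSet_empty, sup_bot_eq]
      exact hFacy
    | @insert s A hsA ih =>
      intro hsub
      have hsS : s ∈ S := hsub (Finset.mem_insert_self s A)
      have hAsub : ↑A ⊆ S := fun x hx => hsub (Finset.mem_insert_of_mem hx)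
      obtain ⟨K, hKprop, hKacy, hKgood⟩ := ih hAsub
      -- find a crossing edge on a shortest path from s to its witness
      obtain ⟨w, hwS, hws, hre, hdw⟩ := hS s
      obtain ⟨P, hP⟩ := hre.exists_walk_length_eq_dist
      have hcross : root s ≠ root w := by
        rw [hroot_self s hsS, hroot_self w hwS]
        exact fun h => hws h.symm
      obtain ⟨a, b, W₁, W₂, hab, ha, hb, hlen⟩ := exists_cross root P hcross
      have hras : root a = s := by rw [ha, hroot_self s hsS]
      have hfa : f a ≤ W₁.length := by
        have h1 : f a ≤ G.dist a s := hfle a s hsS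
        have h2 : G.dist a s ≤ W₁.reverse.length := SimpleGraph.dist_le W₁.reverse
        rw [Walk.length_reverse] at h2
        omega
      have hfb : f b ≤ W₂.length := by
        have h1 : f b ≤ G.dist b w := hfle b w hwS
        have h2 : G.dist b w ≤ W₂.length := SimpleGraph.dist_le W₂
        omega
      have hbound : f a + 1 + f b ≤ k := by
        rw [hP] at hlen
        omega
      have hrbs : root b ≠ s := by rw [hroot_self s hsS] at hb; exact hb
      have hrne : root a ≠ root b := by rw [hras]; exact fun h => hrbs h.symm
      by_cases hreach : (F ⊔ fromEdgeSet K).Reachable a b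
      · -- component of s is already attached to another one through K
        obtain ⟨WH⟩ := hreach
        obtain ⟨a', b', _, _, hadj', ha', hb', -⟩ := exists_cross root WH hrne
        have hKedge : s(a', b') ∈ K := by
          rcases hadj' with hF | hK
          · exact absurd ((hroot_reach hF.reachable).symm.trans ha') hb'
          · exact ((fromEdgeSet_adj _).mp hK).1
        obtain ⟨x, y, hexy, hxyadj, hxyrne, hxybound⟩ := hKprop _ hKedge
        have hor : root x = s ∨ root y = s := by
          rw [Sym2.eq_iff] at hexy
          rcases hexy with ⟨rfl, rfl⟩ | ⟨h1, h2⟩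
          · left; rw [ha', hras]
          · right; rw [← h1, ha', hras]
        refine ⟨K, hKprop, hKacy, ?_⟩
        intro t ht
        rcases Finset.mem_insert.mp ht with rfl | htA
        · exact ⟨x, y, hexy ▸ hKedge, hxyadj, hxyrne, hxybound, hor⟩
        · exact hKgood t htA
      · -- add the crossing edge
        refine ⟨insert s(a,b) K, ?_, ?_, ?_⟩
        · intro e he
          rcases Set.mem_insert_iff.mp he with rfl | heK
          · exact ⟨a, b, rfl, hab, hrne, hbound⟩
          · exact hKprop e heK
        · have hEq : F ⊔ fromEdgeSet (insert s(a,b) K) =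
              (F ⊔ fromEdgeSet K) ⊔ fromEdgeSet {s(a,b)} := by
            rw [Set.insert_eq, fromEdgeSet_union, sup_comm (fromEdgeSet {s(a,b)}),
              ← sup_assoc]
          rw [hEq]
          exact lemA hKacy hab.ne hreach
        · intro t ht
          rcases Finset.mem_insert.mp ht with rfl | htA
          · exact ⟨a, b, Set.mem_insert _ _, hab, hrne, hbound, Or.inl hras⟩
          · obtain ⟨x, y, hm, h2, h3, h4, h5⟩ := hKgood t htA
            exact ⟨x, y, Set.mem_insert_of_mem _ hm, h2, h3, h4, h5⟩
  obtain ⟨K, hKprop, hKacy, hKgood⟩ := main S.toFinite.toFinset (fun x hx => (Set.Finite.mem_toFinset _).mp hx)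
  have hKle : fromEdgeSet K ≤ G := by
    intro u v huv
    rw [fromEdgeSet_adj] at huv
    obtain ⟨hmem, hne'⟩ := huv
    obtain ⟨x, y, hexy, hxy, -, -⟩ := hKprop _ hmem
    rw [Sym2.eq_iff] at hexy
    rcases hexy with ⟨rfl, rfl⟩ | ⟨rfl, rfl⟩
    · exact hxy
    · exact hxy.symm
  obtain ⟨T, hHT, hTG, hTtree⟩ := extend_tree hG (sup_le hFG hKle) hKacy
  have hFT : F ≤ T := le_trans le_sup_left hHT
  have hKT : fromEdgeSet K ≤ T := le_trans le_sup_right hHT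
  refine ⟨T, hTG, hTtree, ?_⟩
  have helper : ∀ x y, s(x,y) ∈ K → G.Adj x y → root x ≠ root y → f x + 1 + f y ≤ k →
      ∃ z ∈ S, z ≠ root x ∧ T.Reachable (root x) z ∧ T.dist (root x) z ≤ k := by
    intro x y hmem hadj hrne hbound
    obtain ⟨Wx, hWx⟩ := hroot_walk x
    obtain ⟨Wy, hWy⟩ := hroot_walk y
    have hTxy : T.Adj x y := hKT ((fromEdgeSet_adj _).mpr ⟨hmem, hadj.ne⟩)
    refine ⟨root y, hroot_mem y, fun h => hrne h.symm, ?_, ?_⟩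
    · exact ⟨((Wx.mapLe hFT).reverse.append (Walk.cons hTxy (Wy.mapLe hFT)))⟩
    · refine le_trans (SimpleGraph.dist_le
        ((Wx.mapLe hFT).reverse.append (Walk.cons hTxy (Wy.mapLe hFT)))) ?_
      simp only [Walk.length_append, Walk.length_reverse, Walk.length_cons, Walk.length_map]
      omega
  intro v
  by_cases hvS : v ∈ S
  · obtain ⟨x, y, hmem, hadj, hrne, hbound, hor⟩ :=
      hKgood v (by rw [Set.Finite.mem_toFinset]; exact hvS)
    rcases hor with hrx | hry
    · obtain ⟨z, hz1, hz2, hz3, hz4⟩ := helper x y hmem hadj hrne hbound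
      rw [hrx] at hz2 hz3 hz4
      exact ⟨z, hz1, hz2, hz3, hz4⟩
    · obtain ⟨z, hz1, hz2, hz3, hz4⟩ := helper y x (Sym2.eq_swap ▸ hmem) hadj.symm
        (Ne.symm hrne) (by omega)
      rw [hry] at hz2 hz3 hz4
      exact ⟨z, hz1, hz2, hz3, hz4⟩
  · obtain ⟨W, hW⟩ := hroot_walk v
    refine ⟨root v, hroot_mem v, fun h => hvS (h ▸ hroot_mem v), ⟨W.mapLe hFT⟩, ?_⟩
    refine le_trans (SimpleGraph.dist_le (W.mapLe hFT)) ?_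
    rw [Walk.mapLe, Walk.length_map]
    exact le_trans hW (hfk v)

lemma univ_tds [Fintype V] {G : SimpleGraph V} (hG : G.Connected) {k : ℕ} (hk : 1 ≤ k)
    (hn : 2 ≤ Fintype.card V) : TotalKDomSet G k (Set.univ : Set V) := by
  intro v
  obtain ⟨u, hu⟩ := Fintype.exists_ne_of_one_lt_card (by omega) v
  obtain ⟨W⟩ := hG v u
  cases W with
  | nil => exact absurd rfl hu
  | @cons _ x _ h q =>
    refine ⟨x, Set.mem_univ x, h.ne', h.reachable, ?_⟩
    calc G.dist v x ≤ (Walk.cons h Walk.nil).length := SimpleGraph.dist_le _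
    _ = 1 := by simp
    _ ≤ k := hk

lemma tds_mono {G T : SimpleGraph V} (hTG : T ≤ G) {k : ℕ} {S : Set V}
    (h : TotalKDomSet T k S) : TotalKDomSet G k S := by
  intro v
  obtain ⟨w, hwS, hne, hre, hd⟩ := h v
  exact ⟨w, hwS, hne, hre.mono hTG, le_trans (hre.dist_anti hTG) hd⟩


end Aux

theorem exists_spanning_tree_totalKDomNum_eq {V : Type*} [Fintype V]
    (k : ℕ) (hk : 1 ≤ k) (G : SimpleGraph V) (hG : G.Connected)
    (hn : 2 ≤ Fintype.card V) :
    ∃ T : SimpleGraph V, T ≤ G ∧ T.IsTree ∧ totalKDomNum T k = totalKDomNum G k := by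
  classical
  have hGne : {m | ∃ S : Set V, TotalKDomSet G k S ∧ S.ncard = m}.Nonempty :=
    ⟨_, Set.univ, univ_tds hG hk hn, rfl⟩
  obtain ⟨S, hS, hScard⟩ := Nat.sInf_mem hGne
  obtain ⟨T, hTG, hTtree, hTS⟩ := key hG hk hS
  refine ⟨T, hTG, hTtree, le_antisymm ?_ ?_⟩
  · -- γ T ≤ γ G
    have : totalKDomNum G k ∈ {m | ∃ S : Set V, TotalKDomSet T k S ∧ S.ncard = m} :=
      ⟨S, hTS, hScard⟩
    exact Nat.sInf_le this
  · -- γ G ≤ γ T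
    have hTne : {m | ∃ S : Set V, TotalKDomSet T k S ∧ S.ncard = m}.Nonempty :=
      ⟨_, Set.univ, univ_tds hTtree.isConnected hk hn, rfl⟩
    obtain ⟨S', hS', hS'card⟩ := Nat.sInf_mem hTne
    exact Nat.sInf_le ⟨S', tds_mono hTG hS', hS'card⟩
end

section
/- For every integer k ≥ 1, if G is a graph without isolated vertices, then γₖᵗ(G) ≥ subₖᵗ(G), where subₖᵗ(G) is the smallest integer j such that the sum of the j largest k-degrees of vertices of G is at least the order n of G. -/
open SimpleGraph

/-- The sub-total `k`-domination number: the least `j` such that the sum of the `j`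
largest `k`-degrees is at least `n`.  (The sum of the `j` largest `k`-degrees is the
maximum of `∑ v ∈ A, d_{G,k}(v)` over sets `A` of `j` vertices.) -/
noncomputable def subTotalKDomNum {V : Type*} [Fintype V] (G : SimpleGraph V) (k : ℕ) : ℕ :=
  sInf {j | ∃ A : Finset V, A.card = j ∧
    Fintype.card V ≤ ∑ v ∈ A, ({w | w ≠ v ∧ G.Reachable v w ∧ G.dist v w ≤ k} : Set V).ncard}

open Finset

/-! A total `k`-dominating set `S` puts every vertex in the `k`-neighbourhood of some vertex
of `S`, so these `|S|` neighbourhoods cover `V` and `n ≤ ∑_{v ∈ S} d_{G,k}(v)`, which is at most the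
sum of the `|S|` largest `k`-degrees. Without isolated vertices `V` itself is total `k`-dominating,
so a minimum total `k`-dominating set exists. -/

namespace SimpleGraph

variable {V : Type*} {G : SimpleGraph V} {k : ℕ}

variable (G k) in
/-- The `k`-neighbourhood of `v`, whose cardinality is the `k`-degree `d_{G,k}(v)`. -/
def kNeighborSet (v : V) : Set V := {w | w ≠ v ∧ G.Reachable v w ∧ G.dist v w ≤ k}

lemma mem_kNeighborSet_comm {v w : V} : w ∈ G.kNeighborSet k v ↔ v ∈ G.kNeighborSet k w :=
  ne_comm.and (reachable_comm.and (by rw [dist_comm]))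

end SimpleGraph

section

variable {V : Type*} {G : SimpleGraph V} {k : ℕ}

lemma totalKDomSet_univ (hk : 1 ≤ k) (hG : ∀ v : V, ∃ w : V, G.Adj v w) :
    TotalKDomSet G k Set.univ := fun v => by
  obtain ⟨w, hvw⟩ := hG v
  exact ⟨w, trivial, hvw.ne', hvw.reachable, dist_eq_one_iff_adj.2 hvw ▸ hk⟩

lemma exists_totalKDomSet_ncard_eq_totalKDomNum (h : ∃ S, TotalKDomSet G k S) :
    ∃ S, TotalKDomSet G k S ∧ S.ncard = totalKDomNum G k :=
  Nat.sInf_mem (s := {m | ∃ S : Set V, TotalKDomSet G k S ∧ S.ncard = m})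
    (h.elim fun S hS => ⟨_, S, hS, rfl⟩)

lemma TotalKDomSet.card_le_sum_ncard_kNeighborSet [Fintype V] {S : Finset V}
    (hS : TotalKDomSet G k S) : Fintype.card V ≤ ∑ v ∈ S, (G.kNeighborSet k v).ncard := by
  classical
  have hcover : univ ⊆ S.biUnion fun v => (G.kNeighborSet k v).toFinset := fun u _ => by
    obtain ⟨w, hwS, hw⟩ := hS u
    exact mem_biUnion.2 ⟨w, hwS, Set.mem_toFinset.2 (mem_kNeighborSet_comm.1 hw)⟩
  calc Fintype.card V ≤ _ := card_le_card hcover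
    _ ≤ _ := card_biUnion_le
    _ = _ := by simp only [Set.ncard_eq_toFinset_card']

lemma subTotalKDomNum_le_card [Fintype V] {S : Finset V} (hS : TotalKDomSet G k S) :
    subTotalKDomNum G k ≤ S.card :=
  Nat.sInf_le ⟨S, rfl, hS.card_le_sum_ncard_kNeighborSet⟩

end

theorem totalKDomNum_ge_subTotalKDomNum {V : Type*} [Fintype V]
    (k : ℕ) (hk : 1 ≤ k) (G : SimpleGraph V) (hG : ∀ v : V, ∃ w : V, G.Adj v w) :
    subTotalKDomNum G k ≤ totalKDomNum G k := by
  obtain ⟨S, hS, hcard⟩ :=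
    exists_totalKDomSet_ncard_eq_totalKDomNum ⟨_, totalKDomSet_univ hk hG⟩
  lift S to Finset V using S.toFinite
  rw [← hcard, Set.ncard_coe_finset]
  exact subTotalKDomNum_le_card hS
end

section
/- For every integer k ≥ 1, if G is a connected graph of order n ≥ 2, then γₖᵗ(G) ≥ (diam(G) + 1) / (2k). -/
open SimpleGraph

private lemma dist_start_getVert_le {V : Type*} {G : SimpleGraph V} (hG : G.Connected)
    {u v : V} (p : G.Walk u v) : ∀ i : ℕ, G.dist u (p.getVert i) ≤ i := by
  intro i
  induction i with
  | zero => simp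
  | succ i ih =>
    by_cases h : i < p.length
    · have h2 : G.dist (p.getVert i) (p.getVert (i + 1)) ≤ 1 := by
        simpa using SimpleGraph.dist_le (p.adj_getVert_succ h).toWalk
      have h3 := hG.dist_triangle (u := u) (v := p.getVert i) (w := p.getVert (i + 1))
      omega
    · have h1 : p.getVert (i + 1) = v := p.getVert_of_length_le (by omega)
      have h2 : G.dist u v ≤ p.length := SimpleGraph.dist_le p
      rw [h1]; omega

private lemma dist_le_mul_of_walk {V : Type*} {G : SimpleGraph V} (hG : G.Connected) {k : ℕ}
    {S : Set V} {H : SimpleGraph S} (hH : ∀ a b : S, H.Adj a b → G.dist a b ≤ k) :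
    ∀ {a b : S} (W : H.Walk a b), G.dist (a : V) (b : V) ≤ k * W.length := by
  intro a b W
  induction W with
  | nil => simp
  | @cons a c b h q ih =>
    have h1 := hG.dist_triangle (u := (a : V)) (v := (c : V)) (w := (b : V))
    have h2 := hH _ _ h
    simp only [Walk.length_cons]
    calc G.dist (a : V) (b : V) ≤ G.dist (a : V) (c : V) + G.dist (c : V) (b : V) := h1
      _ ≤ k + k * q.length := by omega
      _ = k * (q.length + 1) := by ring

private def auxH {V : Type*} (G : SimpleGraph V) (k : ℕ) (S : Set V) : SimpleGraph S where
  Adj a b := a ≠ b ∧ G.dist (a : V) (b : V) ≤ k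
  symm := by
    refine ⟨fun a b h => ?_⟩
    exact ⟨h.1.symm, by rw [G.dist_comm]; exact h.2⟩
  loopless := ⟨fun a h => h.1 rfl⟩

theorem totalKDomNum_ge_diam {V : Type*} [Fintype V]
    (k : ℕ) (hk : 1 ≤ k) (G : SimpleGraph V) (hG : G.Connected)
    (hn : 2 ≤ Fintype.card V) :
    ((G.diam : ℝ) + 1) / (2 * k) ≤ totalKDomNum G k := by
  classical
  have hV : Nonempty V := Fintype.card_pos_iff.mp (by omega)
  -- the defining set of `totalKDomNum` is nonempty: `Set.univ` works
  have huniv : TotalKDomSet G k Set.univ := by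
    intro v
    obtain ⟨w, hw⟩ := Fintype.exists_ne_of_one_lt_card (by omega) v
    obtain ⟨p⟩ := hG.preconnected v w
    have hnil : ¬ p.Nil := Walk.not_nil_of_ne fun h => hw h.symm
    have hadj : G.Adj v (p.getVert 1) := p.adj_snd hnil
    refine ⟨p.getVert 1, Set.mem_univ _, hadj.ne', hadj.reachable, ?_⟩
    have := SimpleGraph.dist_le hadj.toWalk
    simp only [Walk.length_cons, Walk.length_nil] at this
    omega
  have hmem : totalKDomNum G k ∈ {m | ∃ S : Set V, TotalKDomSet G k S ∧ S.ncard = m} :=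
    Nat.sInf_mem ⟨Set.univ.ncard, Set.univ, huniv, rfl⟩
  obtain ⟨S, hS, hcard⟩ := hmem
  set m := totalKDomNum G k with hm
  -- main combinatorial claim
  suffices key : G.diam + 1 ≤ 2 * k * m by
    have hk2 : (0 : ℝ) < 2 * k := by
      have : (1 : ℝ) ≤ (k : ℝ) := by exact_mod_cast hk
      linarith
    rw [div_le_iff₀ hk2]
    calc ((G.diam : ℝ) + 1) ≤ 2 * k * m := by exact_mod_cast key
      _ = m * (2 * k) := by ring
  -- diametral pair and shortest path
  obtain ⟨u, v, huv⟩ := G.exists_dist_eq_diam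
  obtain ⟨p, hp⟩ := (hG.preconnected u v).exists_walk_length_eq_dist
  set d := G.diam with hd
  have hpl : p.length = d := by rw [hp, huv]
  set f : ℕ → V := fun i => p.getVert i with hf
  have hfi : ∀ i, G.dist u (f i) ≤ i := fun i => dist_start_getVert_le hG p i
  have hfj : ∀ j, j ≤ d → G.dist (f j) v ≤ d - j := by
    intro j hj
    have h1 : p.reverse.getVert (d - j) = f j := by
      rw [Walk.getVert_reverse, hpl]
      congr 1
      omega
    have h2 := dist_start_getVert_le hG p.reverse (d - j)
    rw [h1] at h2
    rw [G.dist_comm]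
    exact h2
  have hdistlb : ∀ i j, i ≤ j → j ≤ d → j - i ≤ G.dist (f i) (f j) := by
    intro i j hij hj
    have t1 := hG.dist_triangle (u := u) (v := f i) (w := v)
    have t2 := hG.dist_triangle (u := f i) (v := f j) (w := v)
    have h1 := hfi i
    have h2 := hfj j hj
    have h3 : G.dist u v = d := huv
    omega
  -- auxiliary graph on S
  set H : SimpleGraph S := auxH G k S with hHdef
  have hH : ∀ a b : S, H.Adj a b → G.dist (a : V) (b : V) ≤ k := fun a b h => (show a ≠ b ∧ _ from h).2
  -- dominators of path vertices
  have hdom : ∀ i : ℕ, ∃ w : S, (w : V) ≠ f i ∧ G.dist (f i) (w : V) ≤ k := by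
    intro i
    obtain ⟨w, hwS, hne, _, hdist⟩ := hS (f i)
    exact ⟨⟨w, hwS⟩, hne, hdist⟩
  choose s hs1 hs2 using hdom
  -- every vertex of S has a neighbor in H
  have hpartner : ∀ a : S, ∃ b : S, H.Adj a b := by
    intro a
    obtain ⟨w, hwS, hne, _, hdist⟩ := hS (a : V)
    refine ⟨⟨w, hwS⟩, show _ ≠ _ ∧ _ from ⟨?_, hdist⟩⟩
    intro h
    exact hne (congrArg Subtype.val h).symm
  set cS : S → H.ConnectedComponent := fun a => H.connectedComponentMk a with hcS
  set Csize : H.ConnectedComponent → ℕ :=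
    fun t => (Finset.univ.filter (fun a : S => cS a = t)).card with hCsize
  -- distance bound within a component
  have hcomp : ∀ a b : S, cS a = cS b → G.dist (a : V) (b : V) ≤ k * (Csize (cS a) - 1) := by
    intro a b hab
    obtain ⟨W0⟩ := ConnectedComponent.exact hab
    set W := W0.bypass with hW
    have hpath : W.IsPath := W0.bypass_isPath
    have hsupp : ∀ x ∈ W.support, cS x = cS a := by
      intro x hx
      have : H.Reachable a x := ⟨W.takeUntil x hx⟩
      exact (ConnectedComponent.sound this).symm
    have hsub : W.support.toFinset ⊆ Finset.univ.filter (fun x : S => cS x = cS a) := by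
      intro x hx
      rw [List.mem_toFinset] at hx
      exact Finset.mem_filter.mpr ⟨Finset.mem_univ _, hsupp x hx⟩
    have hlen : W.length + 1 ≤ Csize (cS a) := by
      have h1 : W.support.toFinset.card = W.support.length :=
        List.toFinset_card_of_nodup hpath.support_nodup
      have h2 := Finset.card_le_card hsub
      rw [h1, Walk.length_support] at h2
      exact h2
    calc G.dist (a : V) (b : V) ≤ k * W.length := dist_le_mul_of_walk hG hH W
      _ ≤ k * (Csize (cS a) - 1) := Nat.mul_le_mul_left k (by omega)
  -- each component has at least 2 vertices
  have hsize2 : ∀ a : S, 2 ≤ Csize (cS a) := by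
    intro a
    obtain ⟨b, hb⟩ := hpartner a
    have hba : cS b = cS a := (ConnectedComponent.sound hb.reachable).symm
    apply Finset.one_lt_card.mpr
    exact ⟨a, Finset.mem_filter.mpr ⟨Finset.mem_univ _, rfl⟩,
      b, Finset.mem_filter.mpr ⟨Finset.mem_univ _, hba⟩, (show a ≠ b ∧ _ from hb).1⟩
  -- counting along the path
  set cc : Fin (d + 1) → H.ConnectedComponent := fun i => cS (s i.val) with hcc
  have hcount : (Finset.univ : Finset (Fin (d + 1))).card =
      ∑ t ∈ Finset.univ.image cc, (Finset.univ.filter (fun i => cc i = t)).card :=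
    Finset.card_eq_sum_card_fiberwise (fun x _ => Finset.mem_image_of_mem cc (Finset.mem_univ x))
  have hfib : ∀ t ∈ Finset.univ.image cc,
      (Finset.univ.filter (fun i => cc i = t)).card ≤ 2 * k * Csize t := by
    intro t ht
    set F := Finset.univ.filter (fun i => cc i = t) with hF
    rcases F.eq_empty_or_nonempty with hFe | hFne
    · rw [hFe]; simp
    set i₀ := F.min' hFne with hi₀
    have hi₀F : i₀ ∈ F := F.min'_mem hFne
    have hi₀t : cc i₀ = t := (Finset.mem_filter.mp hi₀F).2
    have hCt2 : 2 ≤ Csize t := by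
      rw [← hi₀t]
      exact hsize2 (s i₀.val)
    have hbound : ∀ j ∈ F, (j : Fin (d + 1)).val ≤ i₀.val + (k * (Csize t - 1) + 2 * k) := by
      intro j hj
      have hjt : cc j = t := (Finset.mem_filter.mp hj).2
      have hij : i₀ ≤ j := F.min'_le j hj
      have hijv : i₀.val ≤ j.val := hij
      have hjd : j.val ≤ d := by omega
      have hlb := hdistlb i₀.val j.val hijv hjd
      have t1 := hG.dist_triangle (u := f i₀.val) (v := (s i₀.val : V)) (w := f j.val)
      have t2 := hG.dist_triangle (u := (s i₀.val : V)) (v := (s j.val : V)) (w := f j.val)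
      have hct : cS (s i₀.val) = t := hi₀t
      have hjt' : cS (s j.val) = t := hjt
      have hc : cS (s i₀.val) = cS (s j.val) := hct.trans hjt'.symm
      have hmid := hcomp (s i₀.val) (s j.val) hc
      rw [hct] at hmid
      have ha1 : G.dist (f i₀.val) (s i₀.val : V) ≤ k := hs2 i₀.val
      have ha2 : G.dist (s j.val : V) (f j.val) ≤ k := by
        rw [G.dist_comm]; exact hs2 j.val
      omega
    have hcardF : F.card ≤ k * (Csize t - 1) + 2 * k + 1 := by
      have himg : F.card = (F.image Fin.val).card :=
        (Finset.card_image_of_injective F Fin.val_injective).symm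
      have hsub : F.image Fin.val ⊆ Finset.Icc i₀.val (i₀.val + (k * (Csize t - 1) + 2 * k)) := by
        intro x hx
        obtain ⟨j, hjF, rfl⟩ := Finset.mem_image.mp hx
        have h1 := hbound j hjF
        have h2 : i₀.val ≤ j.val := F.min'_le j hjF
        exact Finset.mem_Icc.mpr ⟨h2, h1⟩
      have := Finset.card_le_card hsub
      rw [Nat.card_Icc] at this
      omega
    calc F.card ≤ k * (Csize t - 1) + 2 * k + 1 := hcardF
      _ ≤ 2 * k * Csize t := by
        obtain ⟨C', hC'⟩ : ∃ C', Csize t = C' + 2 := ⟨Csize t - 2, by omega⟩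
        rw [hC', show C' + 2 - 1 = C' + 1 from rfl]
        have h1 : 1 ≤ k * C' + k := by
          have : k * C' + k ≥ k := Nat.le_add_left k (k * C')
          omega
        nlinarith [h1]
  -- sum of component sizes is at most |S|
  have hsumC : ∑ t ∈ Finset.univ.image cc, Csize t ≤ m := by
    have hsub : Finset.univ.image cc ⊆ Finset.univ.image cS := by
      intro t ht
      obtain ⟨i, _, rfl⟩ := Finset.mem_image.mp ht
      exact Finset.mem_image_of_mem cS (Finset.mem_univ _)
    have h1 : ∑ t ∈ Finset.univ.image cc, Csize t ≤ ∑ t ∈ Finset.univ.image cS, Csize t :=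
      Finset.sum_le_sum_of_subset hsub
    have h2 : ∑ t ∈ Finset.univ.image cS, Csize t = (Finset.univ : Finset S).card :=
      (Finset.card_eq_sum_card_fiberwise
        (fun x _ => Finset.mem_image_of_mem cS (Finset.mem_univ x))).symm
    have h3 : (Finset.univ : Finset S).card = m :=
      calc (Finset.univ : Finset S).card = Fintype.card S := Finset.card_univ
        _ = S.toFinset.card := (Set.toFinset_card S).symm
        _ = S.ncard := (Set.ncard_eq_toFinset_card' S).symm
        _ = m := hcard
    omega
  -- conclude
  have hfin : d + 1 ≤ 2 * k * m := by
    calc d + 1 = ∑ t ∈ Finset.univ.image cc, (Finset.univ.filter (fun i => cc i = t)).card := by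
          rw [← hcount]; simp
      _ ≤ ∑ t ∈ Finset.univ.image cc, 2 * k * Csize t := Finset.sum_le_sum hfib
      _ = 2 * k * ∑ t ∈ Finset.univ.image cc, Csize t := by rw [Finset.mul_sum]
      _ ≤ 2 * k * m := Nat.mul_le_mul_left _ hsumC
  exact hfin
end

section
/- For every integer k ≥ 1, if G is a connected graph of order n ≥ 2, then γₖᵗ(G) ≥ rad(G) / k. -/
open SimpleGraph

/-- The eccentricity of a vertex: the maximum distance from `v` to a vertex of `G`. -/
noncomputable def eccent {V : Type*} [Fintype V] (G : SimpleGraph V) (v : V) : ℕ :=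
  Finset.univ.sup (fun w => G.dist v w)

/-- The radius of `G`: the minimum eccentricity over all vertices. -/
noncomputable def rad {V : Type*} [Fintype V] (G : SimpleGraph V) : ℕ :=
  sInf {e | ∃ v : V, e = _root_.eccent G v}

namespace RadProofAux

variable {V : Type*}

/-- Auxiliary threshold graph: vertices of `D` joined when their `G`-distance is ≤ `r`. -/
def tg (G : SimpleGraph V) (D : Set V) (r : ℕ) : SimpleGraph V where
  Adj a b := a ≠ b ∧ a ∈ D ∧ b ∈ D ∧ G.dist a b ≤ r
  symm := ⟨by
    intro a b h
    exact ⟨h.1.symm, h.2.2.1, h.2.1, by rw [SimpleGraph.dist_comm]; exact h.2.2.2⟩⟩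
  loopless := ⟨fun a h => h.1 rfl⟩

lemma tg_adj_iff {G : SimpleGraph V} {D : Set V} {r : ℕ} {a b : V} :
    (tg G D r).Adj a b ↔ a ≠ b ∧ a ∈ D ∧ b ∈ D ∧ G.dist a b ≤ r := Iff.rfl

lemma dist_le_mul_length {G : SimpleGraph V} (hG : G.Connected) {D : Set V} {r : ℕ}
    {a b : V} (w : (tg G D r).Walk a b) : G.dist a b ≤ r * w.length := by
  induction w with
  | nil => simp [SimpleGraph.dist_self]
  | @cons x y z h p ih =>
    have h1 : G.dist x z ≤ G.dist x y + G.dist y z := hG.dist_triangle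
    have h2 := h.2.2.2
    simp only [Walk.length_cons]
    calc G.dist x z ≤ G.dist x y + G.dist y z := h1
      _ ≤ r + r * p.length := Nat.add_le_add h2 ih
      _ = r * (p.length + 1) := by ring

lemma reachable_of_mem_support {H : SimpleGraph V} {a b z : V} (w : H.Walk a b)
    (hz : z ∈ w.support) : H.Reachable a z := by
  induction w with
  | nil =>
    simp only [Walk.support_nil, List.mem_singleton] at hz
    exact hz ▸ Reachable.refl _
  | cons h p ih =>
    rw [Walk.support_cons, List.mem_cons] at hz
    rcases hz with rfl | hz
    · exact Reachable.refl _
    · exact h.reachable.trans (ih hz)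

lemma mem_D_of_mem_support {G : SimpleGraph V} {D : Set V} {r : ℕ} {a b z : V}
    (w : (tg G D r).Walk a b) (hz : z ∈ w.support) : z = a ∨ z ∈ D := by
  induction w with
  | nil =>
    simp only [Walk.support_nil, List.mem_singleton] at hz
    exact Or.inl hz
  | cons h p ih =>
    rw [Walk.support_cons, List.mem_cons] at hz
    rcases hz with rfl | hz
    · exact Or.inl rfl
    · rcases ih hz with rfl | hD
      · exact Or.inr h.2.2.1
      · exact Or.inr hD

lemma reachable_transfer {H H' : SimpleGraph V} {a b : V} (w : H.Walk a b)
    (P : V → Prop) (hsup : ∀ z ∈ w.support, P z)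
    (hadj : ∀ x y, H.Adj x y → P x → P y → H'.Adj x y) : H'.Reachable a b := by
  induction w with
  | nil => exact Reachable.refl _
  | cons h p ih =>
    have hPa : P _ := hsup _ (by rw [Walk.support_cons]; exact List.mem_cons_self)
    have hPc : P _ := hsup _ (by rw [Walk.support_cons]; exact List.mem_cons_of_mem _ p.start_mem_support)
    exact ((hadj _ _ h hPa hPc).reachable).trans
      (ih fun z hz => hsup z (by rw [Walk.support_cons]; exact List.mem_cons_of_mem _ hz))

lemma walk_midpoint {G : SimpleGraph V} (hG : G.Connected) {u v : V} (p : G.Walk u v) :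
    ∀ a : ℕ, ∃ x : V, G.dist u x ≤ a ∧ G.dist x v ≤ p.length - a := by
  induction p with
  | @nil x => exact fun a => ⟨x, by simp [SimpleGraph.dist_self], by simp [SimpleGraph.dist_self]⟩
  | @cons x y z h p ih =>
    intro a
    cases a with
    | zero =>
      refine ⟨x, by simp [SimpleGraph.dist_self], ?_⟩
      simpa using SimpleGraph.dist_le (Walk.cons h p)
    | succ b =>
      obtain ⟨c, hc1, hc2⟩ := ih b
      refine ⟨c, ?_, ?_⟩
      · have ht : G.dist x c ≤ G.dist x y + G.dist y c := hG.dist_triangle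
        have h1 : G.dist x y ≤ 1 := by simpa using SimpleGraph.dist_le h.toWalk
        omega
      · have : (Walk.cons h p).length = p.length + 1 := Walk.length_cons _ _
        omega

lemma exists_midpoint {G : SimpleGraph V} (hG : G.Connected) (u v : V) (a : ℕ) :
    ∃ x : V, G.dist u x ≤ a ∧ G.dist x v ≤ G.dist u v - a := by
  obtain ⟨p, hp⟩ := hG.exists_walk_length_eq_dist u v
  rw [← hp]
  exact walk_midpoint hG p a

/-- The component of `s` in the threshold-`k` graph on `D`. -/
def comp (G : SimpleGraph V) (D : Set V) (k : ℕ) (s : V) : Set V :=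
  {y | y ∈ D ∧ (tg G D k).Reachable s y}

lemma comp_subset {G : SimpleGraph V} {D : Set V} {k : ℕ} {s : V} :
    comp G D k s ⊆ D := fun _ h => h.1

lemma mem_comp_self {G : SimpleGraph V} {D : Set V} {k : ℕ} {s : V} (hs : s ∈ D) :
    s ∈ comp G D k s := ⟨hs, Reachable.refl _⟩

lemma comp_eq_of_mem {G : SimpleGraph V} {D : Set V} {k : ℕ} {s y : V}
    (hy : y ∈ comp G D k s) : comp G D k y = comp G D k s := by
  ext z
  exact ⟨fun hz => ⟨hz.1, hy.2.trans hz.2⟩, fun hz => ⟨hz.1, hy.2.symm.trans hz.2⟩⟩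

lemma comp_dist_bound {G : SimpleGraph V} [Fintype V] (hG : G.Connected) {D : Set V} {k : ℕ}
    {s z : V} (hsD : s ∈ D) (hr : (tg G D k).Reachable s z) :
    G.dist s z ≤ k * ((comp G D k s).ncard - 1) := by
  classical
  obtain ⟨w⟩ := hr
  have hfin : (comp G D k s).Finite := Set.toFinite _
  set p : (tg G D k).Walk s z := (w.toPath : (tg G D k).Walk s z) with hp
  have hsub : ∀ y ∈ p.support, y ∈ comp G D k s := by
    intro y hy
    have hy' : y ∈ w.support := Walk.support_toPath_subset w hy
    have h2 := reachable_of_mem_support w hy'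
    rcases mem_D_of_mem_support w hy' with rfl | hD
    · exact mem_comp_self hsD
    · exact ⟨hD, h2⟩
  have hnodup : p.support.Nodup := (w.toPath.2).support_nodup
  have hcard : p.support.toFinset.card = p.length + 1 := by
    rw [List.toFinset_card_of_nodup hnodup, Walk.length_support]
  have hsub2 : p.support.toFinset ⊆ hfin.toFinset := by
    intro y hy
    rw [List.mem_toFinset] at hy
    rw [Set.Finite.mem_toFinset]
    exact hsub y hy
  have hlen : p.length + 1 ≤ (comp G D k s).ncard := by
    rw [Set.ncard_eq_toFinset_card _ hfin]
    rw [← hcard]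
    exact Finset.card_le_card hsub2
  have := dist_le_mul_length hG p
  have h2 : p.length ≤ (comp G D k s).ncard - 1 := by omega
  calc G.dist s z ≤ k * p.length := this
    _ ≤ k * ((comp G D k s).ncard - 1) := Nat.mul_le_mul_left _ h2

lemma dist_getVert_le {H : SimpleGraph V} {a b : V} (w : H.Walk a b) (i : ℕ) :
    H.dist a (w.getVert i) ≤ i := by
  induction w generalizing i with
  | @nil x => simp [Walk.getVert, SimpleGraph.dist_self]
  | @cons x y z h p ih =>
    cases i with
    | zero => simp [Walk.getVert_zero, SimpleGraph.dist_self]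
    | succ j =>
      rw [Walk.getVert_cons_succ]
      have hj := ih j
      have hmem : p.getVert j ∈ p.support := by
        rw [Walk.mem_support_iff_exists_getVert]
        by_cases hjl : j ≤ p.length
        · exact ⟨j, rfl, hjl⟩
        · exact ⟨p.length, by rw [Walk.getVert_length, Walk.getVert_of_length_le _ (by omega)],
            le_rfl⟩
      obtain ⟨q, hq⟩ := (reachable_of_mem_support p hmem).exists_walk_length_eq_dist
      have := SimpleGraph.dist_le (Walk.cons h q)
      rw [Walk.length_cons, hq] at this
      omega

lemma center_lemma [Fintype V] {G : SimpleGraph V} (hG : G.Connected) {k : ℕ} (hk : 1 ≤ k) :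
    ∀ n : ℕ, ∀ D : Set V, D.ncard = n → D.Nonempty →
      (∀ s ∈ D, ∃ s' ∈ D, s' ≠ s ∧ G.dist s s' ≤ k) →
      (∀ s ∈ D, ∀ s' ∈ D, (tg G D (2 * k + 1)).Reachable s s') →
      ∃ x : V, ∀ s ∈ D, G.dist x s ≤ k * (n - 1) := by
  intro n
  induction n using Nat.strong_induction_on with
  | _ n IH =>
  intro D hcard hne h1 h2
  classical
  obtain ⟨s₀, hs₀⟩ := hne
  by_cases hbase : ∀ s ∈ D, (tg G D k).Reachable s₀ s
  · refine ⟨s₀, fun s hs => ?_⟩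
    have hb := comp_dist_bound hG hs₀ (hbase s hs)
    have hle : (comp G D k s₀).ncard ≤ n := by
      rw [← hcard]; exact Set.ncard_le_ncard comp_subset (Set.toFinite _)
    exact hb.trans (Nat.mul_le_mul_left _ (by omega))
  · push_neg at hbase
    obtain ⟨y0, hy0D, hy0⟩ := hbase
    set g : V → ℕ :=
      fun y => sInf ((fun z => (tg G D (2*k+1)).dist s₀ z) '' (comp G D k y)) with hg
    obtain ⟨shat, hshatA, hshatmax⟩ :=
      Set.exists_max_image {y | y ∈ D ∧ ¬ (tg G D k).Reachable s₀ y} g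
        (Set.toFinite _) ⟨y0, hy0D, hy0⟩
    obtain ⟨hshatD, hshatnr⟩ := hshatA
    have hCne : ((fun z => (tg G D (2*k+1)).dist s₀ z) '' (comp G D k shat)).Nonempty :=
      ⟨_, ⟨shat, mem_comp_self hshatD, rfl⟩⟩
    obtain ⟨σ₀, hσ₀C, hσ₀dist⟩ := Nat.sInf_mem hCne
    have hσ₀D : σ₀ ∈ D := hσ₀C.1
    have hCmin : ∀ y ∈ comp G D k shat, g shat ≤ (tg G D (2*k+1)).dist s₀ y :=
      fun y hy => Nat.sInf_le ⟨y, hy, rfl⟩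
    have hs₀C : s₀ ∉ comp G D k shat := fun hmem => hshatnr hmem.2.symm
    have hdisj : ∀ y, y ∈ comp G D k shat → ∀ s, s ∉ comp G D k shat → s ∈ D →
        (tg G D k).Reachable s y → False := by
      intro y hy s hs hsD hr
      exact hs ⟨hsD, hy.2.trans hr.symm⟩
    have hσ₀L : (tg G D (2*k+1)).dist s₀ σ₀ = g shat := hσ₀dist
    have hreach₀ : (tg G D (2*k+1)).Reachable s₀ σ₀ := h2 s₀ hs₀ σ₀ hσ₀D
    have hL₀pos : 1 ≤ g shat := by
      rcases Nat.eq_zero_or_pos (g shat) with h0 | h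
      · exfalso
        have heq : s₀ = σ₀ := (hreach₀.dist_eq_zero_iff).mp (by rw [hσ₀L, h0])
        exact hs₀C (heq ▸ hσ₀C)
      · exact h
    obtain ⟨w, hwlen⟩ := hreach₀.exists_walk_length_eq_dist
    rw [hσ₀L] at hwlen
    set p₀ := w.getVert (g shat - 1) with hp₀
    have hadjp₀ : (tg G D (2*k+1)).Adj p₀ σ₀ := by
      have h' := w.adj_getVert_succ (i := g shat - 1) (by omega)
      rwa [show g shat - 1 + 1 = w.length by omega, w.getVert_length] at h'
    have hdistp₀ : (tg G D (2*k+1)).dist s₀ p₀ ≤ g shat - 1 := dist_getVert_le w _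
    have hp₀D : p₀ ∈ D := hadjp₀.2.1
    have hp₀C : p₀ ∉ comp G D k shat := by
      intro hmem
      have := hCmin _ hmem
      omega
    set D' : Set V := D \ comp G D k shat with hD'
    have hs₀D' : s₀ ∈ D' := ⟨hs₀, hs₀C⟩
    have hp₀D' : p₀ ∈ D' := ⟨hp₀D, hp₀C⟩
    have hCsubD : comp G D k shat ⊆ D := comp_subset
    have hCfin : (comp G D k shat).Finite := Set.toFinite _
    set c := (comp G D k shat).ncard with hc
    set m' := D'.ncard with hm'
    have hcn : m' = n - c := by rw [hm', hD', Set.ncard_diff hCsubD, hcard]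
    have hcle : c ≤ n := by rw [← hcard]; exact Set.ncard_le_ncard hCsubD (Set.toFinite _)
    have hc2 : 2 ≤ c := by
      obtain ⟨s', hs'D, hs'ne, hs'd⟩ := h1 shat hshatD
      have hs'C : s' ∈ comp G D k shat :=
        ⟨hs'D, Adj.reachable ⟨hs'ne.symm, hshatD, hs'D, hs'd⟩⟩
      calc 2 = ({shat, s'} : Set V).ncard := (Set.ncard_pair hs'ne.symm).symm
        _ ≤ c := Set.ncard_le_ncard (by
            intro z hz
            simp only [Set.mem_insert_iff, Set.mem_singleton_iff] at hz
            rcases hz with rfl | rfl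
            · exact mem_comp_self hshatD
            · exact hs'C) hCfin
    have hm'pos : 1 ≤ m' := by
      have hle : ({s₀} : Set V).ncard ≤ m' :=
        Set.ncard_le_ncard (by simp [hs₀D']) (Set.toFinite _)
      simpa using hle
    have h1' : ∀ s ∈ D', ∃ s' ∈ D', s' ≠ s ∧ G.dist s s' ≤ k := by
      intro s hs
      obtain ⟨s', hs'D, hs'ne, hs'd⟩ := h1 s hs.1
      refine ⟨s', ⟨hs'D, ?_⟩, hs'ne, hs'd⟩
      intro hmem
      exact hdisj s' hmem s hs.2 hs.1 (Adj.reachable ⟨hs'ne.symm, hs.1, hs'D, hs'd⟩)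
    have hreachD' : ∀ s' ∈ D', (tg G D' (2*k+1)).Reachable s₀ s' := by
      intro s' hs'
      have hne' : ((fun z => (tg G D (2*k+1)).dist s₀ z) '' (comp G D k s')).Nonempty :=
        ⟨_, ⟨s', mem_comp_self hs'.1, rfl⟩⟩
      obtain ⟨σ', hσ'C, hσ'dist⟩ := Nat.sInf_mem hne'
      have hσ'D : σ' ∈ D := hσ'C.1
      have hgle : g s' ≤ g shat := by
        by_cases hr : (tg G D k).Reachable s₀ s'
        · have hmem : s₀ ∈ comp G D k s' := ⟨hs₀, hr.symm⟩
          have h0 : g s' ≤ (tg G D (2*k+1)).dist s₀ s₀ := Nat.sInf_le ⟨s₀, hmem, rfl⟩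
          rw [SimpleGraph.dist_self] at h0
          omega
        · exact hshatmax s' ⟨hs'.1, hr⟩
      have hσ'val : (tg G D (2*k+1)).dist s₀ σ' = g s' := hσ'dist
      have hreachσ' : (tg G D (2*k+1)).Reachable s₀ σ' := h2 s₀ hs₀ σ' hσ'D
      obtain ⟨ws, hwslen⟩ := hreachσ'.exists_walk_length_eq_dist
      rw [hσ'val] at hwslen
      have hCs'disj : ∀ z, z ∈ comp G D k σ' → z ∉ comp G D k shat := by
        intro z hz hmem
        exact hdisj z hmem s' hs'.2 hs'.1 (hσ'C.2.trans hz.2)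
      have hsupp : ∀ z ∈ ws.support, z ∈ D' := by
        intro z hz
        have hzD : z ∈ D := by
          rcases mem_D_of_mem_support ws hz with rfl | h
          · exact hs₀
          · exact h
        refine ⟨hzD, ?_⟩
        by_cases hzσ : z = σ'
        · subst hzσ
          exact hCs'disj z (mem_comp_self hσ'D)
        · intro hmem
          have ht1 := SimpleGraph.dist_le (ws.takeUntil z hz)
          have hspec := congrArg Walk.length (ws.take_spec hz)
          rw [Walk.length_append] at hspec
          have hdropne : (ws.dropUntil z hz).length ≠ 0 := by
            intro h0
            exact hzσ (Walk.eq_of_length_eq_zero h0)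
          have hmin := hCmin z hmem
          omega
      have leg1 : (tg G D' (2*k+1)).Reachable s₀ σ' :=
        reachable_transfer ws (fun z => z ∈ D') hsupp
          (fun x y hxy hx hy => ⟨hxy.1, hx, hy, hxy.2.2.2⟩)
      obtain ⟨wk⟩ := hσ'C.2.symm
      have hsupp2 : ∀ z ∈ wk.support, z ∈ D' := by
        intro z hz
        have hzD : z ∈ D := by
          rcases mem_D_of_mem_support wk hz with rfl | h
          · exact hσ'D
          · exact h
        refine ⟨hzD, ?_⟩
        exact hCs'disj z ⟨hzD, reachable_of_mem_support wk hz⟩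
      have leg2 : (tg G D' (2*k+1)).Reachable σ' s' :=
        reachable_transfer wk (fun z => z ∈ D') hsupp2
          (fun x y hxy hx hy => ⟨hxy.1, hx, hy, hxy.2.2.2.trans (by omega)⟩)
      exact leg1.trans leg2
    have h2' : ∀ s ∈ D', ∀ t ∈ D', (tg G D' (2*k+1)).Reachable s t :=
      fun s hs t ht => (hreachD' s hs).symm.trans (hreachD' t ht)
    have hm'lt : m' < n := by omega
    obtain ⟨x', hx'⟩ := IH m' hm'lt D' rfl ⟨s₀, hs₀D'⟩ h1' h2'
    have hp₀σ₀ : G.dist p₀ σ₀ ≤ 2*k+1 := hadjp₀.2.2.2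
    have hLle : G.dist x' σ₀ ≤ k * (m' - 1) + (2*k+1) := by
      have ht : G.dist x' σ₀ ≤ G.dist x' p₀ + G.dist p₀ σ₀ := hG.dist_triangle
      have hxp := hx' p₀ hp₀D'
      omega
    obtain ⟨x, hx1, hx2⟩ := exists_midpoint hG x' σ₀ (min (k+1) (G.dist x' σ₀))
    refine ⟨x, fun s hs => ?_⟩
    by_cases hsC : s ∈ comp G D k shat
    · have hchain : G.dist σ₀ s ≤ k * (c - 1) := by
        have hreach : (tg G D k).Reachable σ₀ s := hσ₀C.2.symm.trans hsC.2
        have hb := comp_dist_bound hG hσ₀D hreach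
        rwa [comp_eq_of_mem hσ₀C] at hb
      have ht : G.dist x s ≤ G.dist x σ₀ + G.dist σ₀ s := hG.dist_triangle
      have hsub : G.dist x' σ₀ - min (k+1) (G.dist x' σ₀) ≤ k * (m' - 1) + k := by
        rcases le_total (k+1) (G.dist x' σ₀) with hcase | hcase
        · rw [min_eq_left hcase]; omega
        · rw [min_eq_right hcase]; omega
      have htot : k * (m' - 1) + k + k * (c - 1) ≤ k * (n - 1) := by
        have harith : (m' - 1) + 1 + (c - 1) = n - 1 := by omega
        have hr : k * (m' - 1) + k + k * (c - 1) = k * ((m' - 1) + 1 + (c - 1)) := by ring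
        rw [hr, harith]
      omega
    · have hsD' : s ∈ D' := ⟨hs, hsC⟩
      have ht : G.dist x s ≤ G.dist x x' + G.dist x' s := hG.dist_triangle
      have hxx' : G.dist x x' ≤ k + 1 := by
        rw [SimpleGraph.dist_comm]
        exact hx1.trans (min_le_left _ _)
      have hxs := hx' s hsD'
      have hfin2 : (k+1) + k * (m' - 1) ≤ k * (n - 1) := by
        have harith : (m' - 1) + 1 + (c - 1) = n - 1 := by omega
        have hkc : k + 1 ≤ k * (1 + (c - 1)) := by
          have : k * (1 + (c-1)) = k + k * (c-1) := by ring
          rw [this]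
          have h1c : 1 ≤ c - 1 := by omega
          have hkk : 1 * 1 ≤ k * (c - 1) := Nat.mul_le_mul hk h1c
          omega
        calc (k+1) + k * (m'-1) ≤ k * (1 + (c-1)) + k * (m'-1) := by omega
          _ = k * ((m'-1) + 1 + (c-1)) := by ring
          _ = k * (n-1) := by rw [harith]
      omega


end RadProofAux

theorem totalKDomNum_ge_rad_div_k {V : Type*} [Fintype V]
    (k : ℕ) (hk : 1 ≤ k) (G : SimpleGraph V) (hG : G.Connected)
    (hn : 2 ≤ Fintype.card V) :
    (rad G : ℝ) / k ≤ totalKDomNum G k := by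
  classical
  have hVne : Nonempty V := Fintype.card_pos_iff.mp (by omega)
  have huniv : TotalKDomSet G k Set.univ := by
    intro v
    obtain ⟨u, hu⟩ := Fintype.exists_ne_of_one_lt_card (by omega) v
    obtain ⟨p⟩ := hG.preconnected v u
    cases p with
    | nil => exact absurd rfl hu
    | @cons _ y _ h q =>
      refine ⟨y, Set.mem_univ _, (G.ne_of_adj h).symm, h.reachable, ?_⟩
      have hd1 : G.dist v y ≤ 1 := by simpa using SimpleGraph.dist_le h.toWalk
      omega
  have hsetne : {m | ∃ S : Set V, TotalKDomSet G k S ∧ S.ncard = m}.Nonempty :=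
    ⟨(Set.univ : Set V).ncard, Set.univ, huniv, rfl⟩
  obtain ⟨S, hS, hScard⟩ := Nat.sInf_mem hsetne
  have hSne : S.Nonempty := by
    obtain ⟨v⟩ := hVne
    obtain ⟨w, hwS, _⟩ := hS v
    exact ⟨w, hwS⟩
  have hmpos : 1 ≤ S.ncard := (Set.ncard_pos (Set.toFinite _)).mpr hSne
  have h1 : ∀ s ∈ S, ∃ s' ∈ S, s' ≠ s ∧ G.dist s s' ≤ k := by
    intro s _
    obtain ⟨w, hwS, hwne, _, hwd⟩ := hS s
    exact ⟨w, hwS, hwne, hwd⟩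
  have h2 : ∀ s ∈ S, ∀ s' ∈ S, (RadProofAux.tg G S (2*k+1)).Reachable s s' := by
    intro s hsS s' hs'S
    set B : Set V :=
      {v | ∃ z ∈ S, (RadProofAux.tg G S (2*k+1)).Reachable s z ∧ G.dist z v ≤ k} with hB
    have hsB : s ∈ B := ⟨s, hsS, Reachable.refl _, by simp [SimpleGraph.dist_self]⟩
    have hBuniv : ∀ v : V, v ∈ B := by
      by_contra hcon
      push_neg at hcon
      obtain ⟨v, hv⟩ := hcon
      obtain ⟨p⟩ := hG.preconnected s v
      obtain ⟨d, _, hdfst, hdsnd⟩ := p.exists_boundary_dart B hsB hv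
      obtain ⟨z, hzS, hzreach, hzd⟩ := hdfst
      obtain ⟨z', hz'S, hz'ne, _, hz'd⟩ := hS d.snd
      have hdz : G.dist z z' ≤ 2*k+1 := by
        have t1 : G.dist z z' ≤ G.dist z d.snd + G.dist d.snd z' := hG.dist_triangle
        have t2 : G.dist z d.snd ≤ G.dist z d.fst + G.dist d.fst d.snd := hG.dist_triangle
        have t3 : G.dist d.fst d.snd ≤ 1 := by simpa using SimpleGraph.dist_le d.adj.toWalk
        omega
      have hreachz' : (RadProofAux.tg G S (2*k+1)).Reachable s z' := by
        by_cases hzz : z = z'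
        · exact hzz ▸ hzreach
        · exact hzreach.trans (Adj.reachable ⟨hzz, hzS, hz'S, hdz⟩)
      refine hdsnd ⟨z', hz'S, hreachz', ?_⟩
      rw [SimpleGraph.dist_comm]
      exact hz'd
    obtain ⟨z, hzS, hzreach, hzd⟩ := hBuniv s'
    by_cases hzz : z = s'
    · exact hzz ▸ hzreach
    · exact hzreach.trans (Adj.reachable ⟨hzz, hzS, hs'S, hzd.trans (by omega)⟩)
  obtain ⟨x, hx⟩ := RadProofAux.center_lemma hG hk S.ncard S rfl hSne h1 h2
  have hxall : ∀ v : V, G.dist x v ≤ k * S.ncard := by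
    intro v
    obtain ⟨w, hwS, hwne, _, hwd⟩ := hS v
    have ht : G.dist x v ≤ G.dist x w + G.dist w v := hG.dist_triangle
    have h1' := hx w hwS
    have hwv : G.dist w v ≤ k := by rw [SimpleGraph.dist_comm]; exact hwd
    have harith : k * (S.ncard - 1) + k = k * S.ncard := by
      have hs1 : (S.ncard - 1) + 1 = S.ncard := by omega
      calc k * (S.ncard - 1) + k = k * ((S.ncard - 1) + 1) := by ring
        _ = k * S.ncard := by rw [hs1]
    omega
  have hecc : _root_.eccent G x ≤ k * S.ncard := Finset.sup_le fun w _ => hxall w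
  have hrad : rad G ≤ k * S.ncard := le_trans (Nat.sInf_le ⟨x, rfl⟩) hecc
  have hmeq : S.ncard = totalKDomNum G k := hScard
  rw [hmeq] at hrad
  have hk0 : (0:ℝ) < (k:ℝ) := by exact_mod_cast hk
  rw [div_le_iff₀ hk0]
  have hcast : (rad G : ℝ) ≤ ((k * totalKDomNum G k : ℕ) : ℝ) := by exact_mod_cast hrad
  push_cast at hcast
  linarith
end

section
/- If G is a graph without isolated vertices, then γₜ(G) ≥ subₜ(G), where subₜ(G) is the smallest integer j such that the sum of the j largest vertex degrees of G is at least the order n of G. -/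
open SimpleGraph

/-- `S` is a total dominating set of `G`: every vertex has a neighbor in `S`. -/
def TotalDomSet {V : Type*} (G : SimpleGraph V) (S : Set V) : Prop :=
  ∀ v : V, ∃ w ∈ S, G.Adj v w

/-- The total domination number `γₜ(G)`. -/
noncomputable def totalDomNum {V : Type*} (G : SimpleGraph V) : ℕ :=
  sInf {m | ∃ S : Set V, TotalDomSet G S ∧ S.ncard = m}
/-- The sub-total domination number: the least `j` such that the sum of the `j`
largest degrees of `G` is at least `n`. -/
noncomputable def subTotalDomNum {V : Type*} [Fintype V] (G : SimpleGraph V)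
    [DecidableRel G.Adj] : ℕ :=
  sInf {j | ∃ A : Finset V, A.card = j ∧ Fintype.card V ≤ ∑ v ∈ A, G.degree v}

/-! Every vertex lies in the neighbourhood of some vertex of a total dominating set `S`, so the
neighbourhoods of the vertices of `S` cover `V` and their sizes, the degrees, add up to at least
`n`. A minimum total dominating set thus consists of `γₜ(G)` vertices of degree sum at least `n`. -/

section

variable {V : Type*} {G : SimpleGraph V}

theorem totalDomSet_univ (hG : ∀ v : V, ∃ w : V, G.Adj v w) : TotalDomSet G Set.univ :=
  fun v ↦ (hG v).imp fun w hw ↦ ⟨Set.mem_univ w, hw⟩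

theorem exists_totalDomSet_ncard_eq_totalDomNum (hG : ∀ v : V, ∃ w : V, G.Adj v w) :
    ∃ S : Set V, TotalDomSet G S ∧ S.ncard = totalDomNum G :=
  Nat.sInf_mem (s := {m | ∃ S : Set V, TotalDomSet G S ∧ S.ncard = m})
    ⟨_, Set.univ, totalDomSet_univ hG, rfl⟩

section Fintype

variable [Fintype V] [DecidableRel G.Adj]

theorem TotalDomSet.card_le_sum_degree {S : Finset V} (hS : TotalDomSet G S) :
    Fintype.card V ≤ ∑ w ∈ S, G.degree w := by
  classical
  have hcover : Finset.univ ⊆ S.biUnion fun w ↦ G.neighborFinset w := fun v _ ↦ by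
    obtain ⟨w, hwS, hvw⟩ := hS v
    exact Finset.mem_biUnion.2 ⟨w, hwS, (G.mem_neighborFinset w v).2 hvw.symm⟩
  calc Fintype.card V = Finset.univ.card := rfl
    _ ≤ (S.biUnion fun w ↦ G.neighborFinset w).card := Finset.card_le_card hcover
    _ ≤ ∑ w ∈ S, (G.neighborFinset w).card := Finset.card_biUnion_le
    _ = ∑ w ∈ S, G.degree w := by simp only [card_neighborFinset_eq_degree]

theorem subTotalDomNum_le_card_of_totalDomSet {S : Finset V} (hS : TotalDomSet G S) :
    subTotalDomNum G ≤ S.card :=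
  Nat.sInf_le ⟨S, rfl, hS.card_le_sum_degree⟩

end Fintype

end

theorem totalDomNum_ge_subTotalDomNum {V : Type*} [Fintype V]
    (G : SimpleGraph V) [DecidableRel G.Adj] (hG : ∀ v : V, ∃ w : V, G.Adj v w) :
    subTotalDomNum G ≤ totalDomNum G := by
  obtain ⟨S, hS, hcard⟩ := exists_totalDomSet_ncard_eq_totalDomNum hG
  lift S to Finset V using S.toFinite
  rw [← hcard, Set.ncard_coe_finset]
  exact subTotalDomNum_le_card_of_totalDomSet hS
end

section
/- If G is a connected graph of order n ≥ 2, then γₜ(G) ≥ rad(G). -/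
open SimpleGraph

namespace TDRad

variable {V : Type*} {G : SimpleGraph V}

/-- There is a walk from `x` to `y` all of whose vertices lie in `A`. -/
def COn (G : SimpleGraph V) (A : Set V) (x y : V) : Prop :=
  ∃ p : G.Walk x y, ∀ v ∈ p.support, v ∈ A

/-- Length of a shortest walk from `x` to `y` within `A`. -/
noncomputable def dOn (G : SimpleGraph V) (A : Set V) (x y : V) : ℕ :=
  sInf {n | ∃ p : G.Walk x y, p.length = n ∧ ∀ v ∈ p.support, v ∈ A}

variable {A B : Set V} {x y z : V}

lemma COn.left_mem (h : COn G A x y) : x ∈ A := by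
  obtain ⟨p, hp⟩ := h; exact hp x p.start_mem_support

lemma COn.right_mem (h : COn G A x y) : y ∈ A := by
  obtain ⟨p, hp⟩ := h; exact hp y p.end_mem_support

lemma COn.refl (hx : x ∈ A) : COn G A x x :=
  ⟨Walk.nil, by simp [hx]⟩

lemma COn.symm (h : COn G A x y) : COn G A y x := by
  obtain ⟨p, hp⟩ := h
  exact ⟨p.reverse, fun v hv => hp v (by simpa [Walk.support_reverse] using hv)⟩

lemma COn.trans (h₁ : COn G A x y) (h₂ : COn G A y z) : COn G A x z := by
  obtain ⟨p, hp⟩ := h₁; obtain ⟨q, hq⟩ := h₂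
  refine ⟨p.append q, fun v hv => ?_⟩
  rcases (Walk.mem_support_append_iff _ _).mp hv with h | h
  · exact hp v h
  · exact hq v h

lemma COn.mono (hAB : A ⊆ B) (h : COn G A x y) : COn G B x y := by
  obtain ⟨p, hp⟩ := h; exact ⟨p, fun v hv => hAB (hp v hv)⟩

lemma dOn_le {p : G.Walk x y} (hp : ∀ v ∈ p.support, v ∈ A) : dOn G A x y ≤ p.length :=
  Nat.sInf_le ⟨p, rfl, hp⟩

lemma exists_dOn_walk (h : COn G A x y) :
    ∃ p : G.Walk x y, p.length = dOn G A x y ∧ ∀ v ∈ p.support, v ∈ A := by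
  obtain ⟨p, hp⟩ := h
  have hne : {n | ∃ p : G.Walk x y, p.length = n ∧ ∀ v ∈ p.support, v ∈ A}.Nonempty :=
    ⟨p.length, p, rfl, hp⟩
  exact Nat.sInf_mem hne

lemma dOn_self (hx : x ∈ A) : dOn G A x x = 0 :=
  Nat.le_zero.mp (by simpa using dOn_le (A := A) (p := (Walk.nil : G.Walk x x)) (by simp [hx]))

lemma dOn_triangle (h₁ : COn G A x y) (h₂ : COn G A y z) :
    dOn G A x z ≤ dOn G A x y + dOn G A y z := by
  obtain ⟨p, hp, hpA⟩ := exists_dOn_walk h₁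
  obtain ⟨q, hq, hqA⟩ := exists_dOn_walk h₂
  have := dOn_le (A := A) (p := p.append q) (fun v hv => by
    rcases (Walk.mem_support_append_iff _ _).mp hv with h | h
    · exact hpA v h
    · exact hqA v h)
  simpa [Walk.length_append, hp, hq] using this

lemma dOn_mono (hAB : A ⊆ B) (h : COn G A x y) : dOn G B x y ≤ dOn G A x y := by
  obtain ⟨p, hp, hpA⟩ := exists_dOn_walk h
  have := dOn_le (A := B) (p := p) (fun v hv => hAB (hpA v hv))
  omega

lemma dOn_adj (hx : x ∈ A) (hy : y ∈ A) (h : G.Adj x y) : dOn G A x y ≤ 1 := by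
  have := dOn_le (A := A) (p := Walk.cons h Walk.nil) (by
    intro v hv
    simp only [Walk.support_cons, Walk.support_nil, List.mem_cons, List.mem_singleton] at hv
    rcases hv with rfl | hv
    · exact hx
    · simp only [List.mem_cons, List.not_mem_nil, or_false] at hv; subst hv; exact hy)
  simpa using this

lemma eq_of_dOn_eq_zero (h : COn G A x y) (h0 : dOn G A x y = 0) : x = y := by
  obtain ⟨p, hp, _⟩ := exists_dOn_walk h
  exact Walk.eq_of_length_eq_zero (by rw [hp, h0])

lemma adj_of_dOn_eq_one (h : COn G A x y) (h1 : dOn G A x y = 1) : G.Adj x y := by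
  obtain ⟨p, hp, _⟩ := exists_dOn_walk h
  exact Walk.adj_of_length_eq_one (by rw [hp, h1])

lemma dist_le_dOn (h : COn G A x y) : G.dist x y ≤ dOn G A x y := by
  obtain ⟨p, hp, _⟩ := exists_dOn_walk h
  have := SimpleGraph.dist_le p
  omega

lemma exists_adj_of_COn (h : COn G A x y) (hne : x ≠ y) : ∃ b ∈ A, G.Adj x b := by
  obtain ⟨p, hp⟩ := h
  cases p with
  | nil => exact absurd rfl hne
  | cons hadj q =>
    exact ⟨_, hp _ (by simp [Walk.support_cons]), hadj⟩



/-- removing a vertex farthest from `z₀` keeps `A` connected. -/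
lemma remove_farthest [DecidableEq V] {z₀ u : V}
    (hconn : ∀ x ∈ A, ∀ y ∈ A, COn G A x y)
    (hz : z₀ ∈ A) (hu : u ∈ A)
    (hmax : ∀ y ∈ A, dOn G A z₀ y ≤ dOn G A z₀ u) (hne : u ≠ z₀) :
    ∀ x ∈ A \ {u}, ∀ y ∈ A \ {u}, COn G (A \ {u}) x y := by
  have key : ∀ x, x ∈ A \ {u} → COn G (A \ {u}) z₀ x := by
    intro x hx
    obtain ⟨p, hlen, hp⟩ := exists_dOn_walk (hconn z₀ hz x hx.1)
    by_cases hus : u ∈ p.support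
    · exfalso
      have hsum : (p.takeUntil u hus).length + (p.dropUntil u hus).length = p.length := by
        have := congrArg Walk.length (p.take_spec hus)
        rwa [Walk.length_append] at this
      have hle : dOn G A z₀ u ≤ (p.takeUntil u hus).length :=
        dOn_le (fun v hv => hp v (Walk.support_takeUntil_subset _ _ hv))
      have hmx : dOn G A z₀ x ≤ dOn G A z₀ u := hmax x hx.1
      have hd0 : (p.dropUntil u hus).length = 0 := by omega
      exact hx.2 (Walk.eq_of_length_eq_zero hd0).symm
    · refine ⟨p, fun v hv => ⟨hp v hv, fun h => hus ?_⟩⟩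
      simp only [Set.mem_singleton_iff] at h
      exact h ▸ hv
  intro x hx y hy
  exact (key x hx).symm.trans (key y hy)

/-- excising a pendant vertex `u₁` whose only neighbor in `B` is `u₂`. -/
lemma excise {u₁ u₂ : V} (hN : ∀ c ∈ B, G.Adj u₁ c → c = u₂) :
    ∀ (n : ℕ) {x y : V} (p : G.Walk x y), p.length ≤ n →
      (∀ v ∈ p.support, v ∈ B) → x ≠ u₁ → y ≠ u₁ →
      ∃ q : G.Walk x y, ∀ v ∈ q.support, v ∈ B \ {u₁} := by
  intro n
  induction n with
  | zero =>
    intro x y p hlen hp hx hy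
    cases p with
    | nil => exact ⟨Walk.nil, by simpa using ⟨hp x (by simp), hx⟩⟩
    | cons h q => simp [Walk.length_cons] at hlen
  | succ n ih =>
    intro x y p hlen hp hx hy
    cases p with
    | nil => exact ⟨Walk.nil, by simpa using ⟨hp x (by simp), hx⟩⟩
    | cons h q =>
      rename_i x₁
      by_cases hx₁ : x₁ = u₁
      · subst hx₁
        cases q with
        | nil => exact absurd rfl hy
        | cons h₂ q₂ =>
          rename_i x₂
          have hx₂B : x₂ ∈ B := hp x₂ (by simp [Walk.support_cons])
          have hx₂ : x₂ = u₂ := hN x₂ hx₂B h₂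
          have hxu₂ : x = u₂ := hN x (hp x (by simp)) h.symm
          have hxx : x₂ = x := by rw [hx₂, hxu₂]
          have hq₂' : ∀ v ∈ (q₂.copy hxx rfl).support, v ∈ B := by
            intro v hv
            rw [Walk.support_copy] at hv
            exact hp v (by simp [Walk.support_cons]; tauto)
          refine ih (q₂.copy hxx rfl) ?_ hq₂' hx hy
          have : (q₂.copy hxx rfl).length = q₂.length := Walk.length_copy _ _ _
          simp [Walk.length_cons] at hlen
          omega
      · obtain ⟨q', hq'⟩ := ih q (by simp [Walk.length_cons] at hlen; omega)
          (fun v hv => hp v (by simp [Walk.support_cons]; tauto)) hx₁ hy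
        refine ⟨Walk.cons h q', fun v hv => ?_⟩
        simp only [Walk.support_cons, List.mem_cons] at hv
        rcases hv with rfl | hv
        · exact ⟨hp v (by simp), hx⟩
        · exact hq' v hv

lemma glue2 {P Q : Set V} {p₀ q₀ : V}
    (hP : ∀ x ∈ P, ∀ y ∈ P, COn G P x y) (hQ : ∀ x ∈ Q, ∀ y ∈ Q, COn G Q x y)
    (hp₀ : p₀ ∈ P) (hq₀ : q₀ ∈ Q) (hbridge : COn G (P ∪ Q) p₀ q₀) :
    ∀ x ∈ P ∪ Q, ∀ y ∈ P ∪ Q, COn G (P ∪ Q) x y := by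
  have hP' : ∀ x ∈ P, ∀ y ∈ P, COn G (P ∪ Q) x y :=
    fun x hx y hy => (hP x hx y hy).mono Set.subset_union_left
  have hQ' : ∀ x ∈ Q, ∀ y ∈ Q, COn G (P ∪ Q) x y :=
    fun x hx y hy => (hQ x hx y hy).mono Set.subset_union_right
  intro x hx y hy
  rcases hx with hx | hx <;> rcases hy with hy | hy
  · exact hP' x hx y hy
  · exact ((hP' x hx p₀ hp₀).trans hbridge).trans (hQ' q₀ hq₀ y hy)
  · exact ((hQ' x hx q₀ hq₀).trans hbridge.symm).trans (hP' p₀ hp₀ y hy)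
  · exact hQ' x hx y hy

lemma exists_boundary {R : Set V} {x y : V} (p : G.Walk x y) :
    x ∈ R → y ∉ R → ∃ a b, a ∈ R ∧ b ∉ R ∧ G.Adj a b := by
  induction p with
  | nil => intro hx hy; exact absurd hx hy
  | @cons u v w h q ih =>
    intro hx hy
    by_cases hm : v ∈ R
    · exact ih hm hy
    · exact ⟨u, v, hx, hm, h⟩


/-- A connected set of `m` vertices has a vertex within distance `m/2` of all others. -/
lemma halfRad [DecidableEq V] :
    ∀ (m : ℕ) (A : Set V), A.Finite → A.Nonempty → A.ncard = m →
      (∀ x ∈ A, ∀ y ∈ A, COn G A x y) →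
      ∃ x ∈ A, ∀ y ∈ A, dOn G A x y ≤ m / 2 := by
  intro m
  induction m using Nat.strong_induction_on with
  | _ m IH =>
  intro A hfin hne hcard hconn
  match m, hcard with
  | 0, hcard => exact absurd ((Set.ncard_eq_zero hfin).mp hcard) hne.ne_empty
  | 1, hcard =>
    obtain ⟨a, rfl⟩ := Set.ncard_eq_one.mp hcard
    refine ⟨a, by simp, fun y hy => ?_⟩
    rcases (by simpa using hy : y = a) with rfl
    simp [dOn_self (show y ∈ ({y} : Set V) by simp)]
  | 2, hcard =>
    obtain ⟨a, b, hab, rfl⟩ := Set.ncard_eq_two.mp hcard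
    have ha : a ∈ ({a, b} : Set V) := by simp
    have hb : b ∈ ({a, b} : Set V) := by simp
    refine ⟨a, ha, fun y hy => ?_⟩
    simp only [Set.mem_insert_iff, Set.mem_singleton_iff] at hy
    rcases hy with rfl | rfl
    · simp [dOn_self ha]
    · obtain ⟨c, hc, hadj⟩ := exists_adj_of_COn (hconn a ha _ hb) hab
      simp only [Set.mem_insert_iff, Set.mem_singleton_iff] at hc
      rcases hc with rfl | rfl
      · exact absurd rfl hadj.ne
      · have := dOn_adj ha hb hadj
        omega
  | (n + 3), hcard =>
    set m := n + 3 with hm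
    have hm3 : 3 ≤ m := by omega
    obtain ⟨z₀, hz₀⟩ := id hne
    -- farthest vertex u₁ from z₀
    obtain ⟨u₁, hu₁A, hu₁max⟩ := Set.exists_max_image A (fun y => dOn G A z₀ y) hfin hne
    have hcard' : 1 < A.ncard := by omega
    obtain ⟨y₁, hy₁A, hy₁ne⟩ := Set.exists_ne_of_one_lt_ncard hcard' z₀
    have hd1 : 1 ≤ dOn G A z₀ y₁ := by
      rcases Nat.eq_zero_or_pos (dOn G A z₀ y₁) with h | h
      · exact absurd (eq_of_dOn_eq_zero (hconn z₀ hz₀ y₁ hy₁A) h).symm hy₁ne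
      · omega
    have hu₁pos : 1 ≤ dOn G A z₀ u₁ := le_trans hd1 (hu₁max y₁ hy₁A)
    have hu₁ne : u₁ ≠ z₀ := by
      rintro rfl
      rw [dOn_self hz₀] at hu₁pos; omega
    set A₁ : Set V := A \ {u₁} with hA₁
    have hA₁sub : A₁ ⊆ A := Set.diff_subset
    have hconn₁ : ∀ x ∈ A₁, ∀ y ∈ A₁, COn G A₁ x y :=
      remove_farthest hconn hz₀ hu₁A hu₁max hu₁ne
    have hz₀1 : z₀ ∈ A₁ := ⟨hz₀, fun h => hu₁ne (by simpa using h.symm)⟩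
    have hcard₁ : A₁.ncard = m - 1 := by
      rw [hA₁, Set.ncard_diff_singleton_of_mem hu₁A, hcard]
    have hfin₁ : A₁.Finite := hfin.subset hA₁sub
    -- farthest vertex u₂ from z₀ in A₁
    obtain ⟨u₂, hu₂A₁, hu₂max⟩ := Set.exists_max_image A₁ (fun y => dOn G A₁ z₀ y) hfin₁ ⟨z₀, hz₀1⟩
    have hcard₁' : 1 < A₁.ncard := by omega
    obtain ⟨y₂, hy₂A, hy₂ne⟩ := Set.exists_ne_of_one_lt_ncard hcard₁' z₀
    have hd2 : 1 ≤ dOn G A₁ z₀ y₂ := by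
      rcases Nat.eq_zero_or_pos (dOn G A₁ z₀ y₂) with h | h
      · exact absurd (eq_of_dOn_eq_zero (hconn₁ z₀ hz₀1 y₂ hy₂A) h).symm hy₂ne
      · omega
    have hu₂pos : 1 ≤ dOn G A₁ z₀ u₂ := le_trans hd2 (hu₂max y₂ hy₂A)
    have hu₂ne : u₂ ≠ z₀ := by
      rintro rfl
      rw [dOn_self hz₀1] at hu₂pos; omega
    set A₂ : Set V := A₁ \ {u₂} with hA₂
    have hA₂sub : A₂ ⊆ A₁ := Set.diff_subset
    have hconn₂ : ∀ x ∈ A₂, ∀ y ∈ A₂, COn G A₂ x y :=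
      remove_farthest hconn₁ hz₀1 hu₂A₁ hu₂max hu₂ne
    have hz₀2 : z₀ ∈ A₂ := ⟨hz₀1, fun h => hu₂ne (by simpa using h.symm)⟩
    have hcard₂ : A₂.ncard = m - 2 := by
      rw [hA₂, Set.ncard_diff_singleton_of_mem hu₂A₁, hcard₁]; omega
    have hfin₂ : A₂.Finite := hfin₁.subset hA₂sub
    have hu₂A : u₂ ∈ A := hA₁sub hu₂A₁
    have hu₂neu₁ : u₂ ≠ u₁ := fun h => hu₂A₁.2 (by simp [h])
    -- neighbor of u₂ inside A₂
    obtain ⟨b₂, hb₂A₁, hb₂adj⟩ := exists_adj_of_COn (hconn₁ u₂ hu₂A₁ z₀ hz₀1) hu₂ne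
    have hb₂A₂ : b₂ ∈ A₂ := ⟨hb₂A₁, fun h => hb₂adj.ne' (by simpa using h)⟩
    by_cases hcA : ∃ c ∈ A₂, G.Adj u₁ c
    · -- Case A
      obtain ⟨c, hcA₂, hcadj⟩ := hcA
      obtain ⟨x, hxA₂, hxbd⟩ := IH (m - 2) (by omega) A₂ hfin₂ ⟨z₀, hz₀2⟩ hcard₂ hconn₂
      have hxA : x ∈ A := hA₁sub (hA₂sub hxA₂)
      refine ⟨x, hxA, fun y hy => ?_⟩
      by_cases hyu₁ : y = u₁
      · subst hyu₁
        have hcAmem : c ∈ A := hA₁sub (hA₂sub hcA₂)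
        calc dOn G A x y ≤ dOn G A x c + dOn G A c y :=
              dOn_triangle (hconn x hxA c hcAmem) (hconn c hcAmem y hy)
          _ ≤ dOn G A₂ x c + 1 := by
              have h1 := dOn_mono (show A₂ ⊆ A from fun t ht => hA₁sub (hA₂sub ht))
                (hconn₂ x hxA₂ c hcA₂)
              have h2 := dOn_adj hcAmem hy hcadj.symm
              omega
          _ ≤ (m - 2) / 2 + 1 := by have := hxbd c hcA₂; omega
          _ ≤ m / 2 := by omega
      · by_cases hyu₂ : y = u₂
        · subst hyu₂
          have hbAmem : b₂ ∈ A := hA₁sub (hA₂sub hb₂A₂)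
          calc dOn G A x y ≤ dOn G A x b₂ + dOn G A b₂ y :=
                dOn_triangle (hconn x hxA b₂ hbAmem) (hconn b₂ hbAmem y hy)
            _ ≤ dOn G A₂ x b₂ + 1 := by
                have h1 := dOn_mono (show A₂ ⊆ A from fun t ht => hA₁sub (hA₂sub ht))
                  (hconn₂ x hxA₂ b₂ hb₂A₂)
                have h2 := dOn_adj hbAmem hy hb₂adj.symm
                omega
            _ ≤ (m - 2) / 2 + 1 := by have := hxbd b₂ hb₂A₂; omega
            _ ≤ m / 2 := by omega
        · have hyA₂ : y ∈ A₂ := ⟨⟨hy, by simpa using hyu₁⟩, by simpa using hyu₂⟩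
          calc dOn G A x y ≤ dOn G A₂ x y :=
                dOn_mono (fun t ht => hA₁sub (hA₂sub ht)) (hconn₂ x hxA₂ y hyA₂)
            _ ≤ (m - 2) / 2 := hxbd y hyA₂
            _ ≤ m / 2 := by omega
    · -- Case B : u₁ is a pendant whose unique neighbor in A is u₂
      have hN : ∀ c ∈ A, G.Adj u₁ c → c = u₂ := by
        intro c hc hadj
        by_contra hcne
        have hcne1 : c ≠ u₁ := hadj.ne'
        exact hcA ⟨c, ⟨⟨hc, by simpa using hcne1⟩, by simpa using hcne⟩, hadj⟩
      obtain ⟨b₁, hb₁A, hb₁adj⟩ := exists_adj_of_COn (hconn u₁ hu₁A z₀ hz₀) hu₁ne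
      have hadj12 : G.Adj u₁ u₂ := (hN b₁ hb₁A hb₁adj) ▸ hb₁adj
      -- a third vertex
      have hx₃ : ∃ x₃ ∈ A, x₃ ≠ u₁ ∧ x₃ ≠ u₂ := by
        by_contra hcon
        push_neg at hcon
        have hsub : A ⊆ insert u₁ {u₂} := by
          intro t ht
          rcases eq_or_ne t u₁ with rfl | h1
          · exact Set.mem_insert _ _
          · have := hcon t ht h1
            subst this
            simp
        have := Set.ncard_le_ncard hsub (Set.finite_singleton u₂ |>.insert u₁)
        have h2 : (insert u₁ ({u₂} : Set V)).ncard ≤ 2 := by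
          have := Set.ncard_insert_le u₁ ({u₂} : Set V)
          simpa using this
        omega
      obtain ⟨x₃, hx₃A, hx₃u₁, hx₃u₂⟩ := hx₃
      have h2d : 2 ≤ dOn G A u₁ x₃ := by
        rcases Nat.lt_or_ge (dOn G A u₁ x₃) 2 with h | h
        · interval_cases hdd : (dOn G A u₁ x₃)
          · exact absurd (eq_of_dOn_eq_zero (hconn u₁ hu₁A x₃ hx₃A) hdd).symm hx₃u₁
          · exact absurd (hN x₃ hx₃A (adj_of_dOn_eq_one (hconn u₁ hu₁A x₃ hx₃A) hdd)) hx₃u₂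
        · exact h
      obtain ⟨w, hwA, hwmax⟩ := Set.exists_max_image A (fun y => dOn G A u₁ y) hfin hne
      have hw2 : 2 ≤ dOn G A u₁ w := le_trans h2d (hwmax x₃ hx₃A)
      have hwu₁ : w ≠ u₁ := by
        rintro rfl
        rw [dOn_self hu₁A] at hw2; omega
      have hwu₂ : w ≠ u₂ := by
        rintro rfl
        have := dOn_adj hu₁A hwA hadj12
        omega
      set A' : Set V := A \ {w} with hA'
      have hA'sub : A' ⊆ A := Set.diff_subset
      have hconn' : ∀ x ∈ A', ∀ y ∈ A', COn G A' x y :=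
        remove_farthest hconn hu₁A hwA hwmax hwu₁
      have hu₁A' : u₁ ∈ A' := ⟨hu₁A, fun h => hwu₁ (by simpa using h.symm)⟩
      have hu₂A' : u₂ ∈ A' := ⟨hu₂A, fun h => hwu₂ (by simpa using h.symm)⟩
      set A'' : Set V := A' \ {u₁} with hA''
      have hA''sub : A'' ⊆ A' := Set.diff_subset
      have hu₂A'' : u₂ ∈ A'' := ⟨hu₂A', by simpa using (Ne.symm hadj12.ne)⟩
      have hconn'' : ∀ x ∈ A'', ∀ y ∈ A'', COn G A'' x y := by
        intro x hx y hy
        obtain ⟨p, hp⟩ := hconn' x (hA''sub hx) y (hA''sub hy)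
        have hN' : ∀ c ∈ A', G.Adj u₁ c → c = u₂ := fun c hc => hN c (hA'sub hc)
        obtain ⟨q, hq⟩ := excise hN' p.length p le_rfl hp
          (fun h => (by simpa using hx.2 (by simpa using h) : False))
          (fun h => (by simpa using hy.2 (by simpa using h) : False))
        exact ⟨q, hq⟩
      have hcard'' : A''.ncard = m - 2 := by
        rw [hA'', Set.ncard_diff_singleton_of_mem hu₁A', hA',
          Set.ncard_diff_singleton_of_mem hwA, hcard]; omega
      obtain ⟨x, hxA'', hxbd⟩ := IH (m - 2) (by omega) A'' (hfin.subset
        (fun t ht => hA'sub (hA''sub ht))) ⟨u₂, hu₂A''⟩ hcard'' hconn''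
      have hA''subA : A'' ⊆ A := fun t ht => hA'sub (hA''sub ht)
      have hxA : x ∈ A := hA''subA hxA''
      refine ⟨x, hxA, fun y hy => ?_⟩
      have hviau₂ : dOn G A x u₂ ≤ (m - 2) / 2 :=
        le_trans (dOn_mono hA''subA (hconn'' x hxA'' u₂ hu₂A'')) (hxbd u₂ hu₂A'')
      by_cases hyu₁ : y = u₁
      · subst hyu₁
        calc dOn G A x y ≤ dOn G A x u₂ + dOn G A u₂ y :=
              dOn_triangle (hconn x hxA u₂ hu₂A) (hconn u₂ hu₂A y hy)
          _ ≤ (m - 2) / 2 + 1 := by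
              have := dOn_adj hu₂A hy hadj12.symm
              omega
          _ ≤ m / 2 := by omega
      · by_cases hyw : y = w
        · subst hyw
          obtain ⟨bw, hbwA, hbwadj⟩ := exists_adj_of_COn (hconn y hy u₁ hu₁A) hwu₁
          have hbwu₁ : bw ≠ u₁ := by
            rintro rfl
            exact hwu₂ (hN y hy hbwadj.symm)
          by_cases hbwu₂ : bw = u₂
          · subst hbwu₂
            calc dOn G A x y ≤ dOn G A x bw + dOn G A bw y :=
                  dOn_triangle (hconn x hxA bw hbwA) (hconn bw hbwA y hy)
              _ ≤ (m - 2) / 2 + 1 := by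
                  have := dOn_adj hbwA hy hbwadj.symm
                  omega
              _ ≤ m / 2 := by omega
          · have hbww : bw ≠ y := hbwadj.ne'
            have hbwA'' : bw ∈ A'' :=
              ⟨⟨hbwA, by simpa using hbww⟩, by simpa using hbwu₁⟩
            calc dOn G A x y ≤ dOn G A x bw + dOn G A bw y :=
                  dOn_triangle (hconn x hxA bw hbwA) (hconn bw hbwA y hy)
              _ ≤ (m - 2) / 2 + 1 := by
                  have h1 := le_trans (dOn_mono hA''subA (hconn'' x hxA'' bw hbwA''))
                    (hxbd bw hbwA'')
                  have h2 := dOn_adj hbwA hy hbwadj.symm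
                  omega
              _ ≤ m / 2 := by omega
        · have hyA'' : y ∈ A'' := ⟨⟨hy, by simpa using hyw⟩, by simpa using hyu₁⟩
          calc dOn G A x y ≤ dOn G A'' x y := dOn_mono hA''subA (hconn'' x hxA'' y hyA'')
            _ ≤ (m - 2) / 2 := hxbd y hyA''
            _ ≤ m / 2 := by omega

/-! ### Components of the induced structure on `S₀` and the merging construction -/

/-- The set of vertices reachable from `s` by walks staying in `S₀`. -/
def comp (G : SimpleGraph V) (S₀ : Set V) (s : V) : Set V := {x | COn G S₀ s x}

lemma comp_subset {S₀ : Set V} {s : V} : comp G S₀ s ⊆ S₀ := fun _ hx => hx.right_mem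

lemma mem_comp_self {S₀ : Set V} {s : V} (hs : s ∈ S₀) : s ∈ comp G S₀ s := COn.refl hs

lemma comp_closed {S₀ : Set V} {s x y : V} (hx : x ∈ comp G S₀ s) (hy : y ∈ comp G S₀ x) :
    y ∈ comp G S₀ s := COn.trans hx hy

lemma comp_symm_mem {S₀ : Set V} {s x : V} (hx : x ∈ comp G S₀ s) : s ∈ comp G S₀ x :=
  COn.symm hx

lemma comp_conn [DecidableEq V] {S₀ : Set V} {s : V} :
    ∀ x ∈ comp G S₀ s, ∀ y ∈ comp G S₀ s, COn G (comp G S₀ s) x y := by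
  have key : ∀ x, x ∈ comp G S₀ s → COn G (comp G S₀ s) s x := by
    intro x hx
    obtain ⟨p, hp⟩ := hx
    exact ⟨p, fun v hv =>
      ⟨p.takeUntil v hv, fun u hu => hp u (Walk.support_takeUntil_subset _ _ hu)⟩⟩
  exact fun x hx y hy => (key x hx).symm.trans (key y hy)

lemma two_le_comp {S₀ : Set V} {s : V} [Fintype V]
    (hTD : ∀ v, ∃ t ∈ S₀, G.Adj v t) (hs : s ∈ S₀) : 2 ≤ (comp G S₀ s).ncard := by
  obtain ⟨s', hs'S, hadj⟩ := hTD s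
  have h2 : s' ∈ comp G S₀ s := by
    refine ⟨Walk.cons hadj Walk.nil, fun v hv => ?_⟩
    simp only [Walk.support_cons, Walk.support_nil, List.mem_cons, List.not_mem_nil,
      or_false] at hv
    rcases hv with rfl | rfl
    · exact hs
    · exact hs'S
  have hsub : ({s, s'} : Set V) ⊆ comp G S₀ s := by
    rintro t (rfl | rfl)
    · exact mem_comp_self hs
    · exact h2
  calc 2 = ({s, s'} : Set V).ncard := (Set.ncard_pair hadj.ne).symm
    _ ≤ (comp G S₀ s).ncard := Set.ncard_le_ncard hsub (Set.toFinite _)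

lemma grow [Fintype V] [DecidableEq V] {S₀ : Set V} (hG : G.Connected)
    (hTD : ∀ v, ∃ s ∈ S₀, G.Adj v s) :
    ∀ (n : ℕ) (W : Set V), W.Nonempty →
      (∀ x ∈ W, ∀ y ∈ W, COn G W x y) →
      (∀ t ∈ S₀ ∩ W, comp G S₀ t ⊆ W) →
      W.ncard ≤ 2 * (S₀ ∩ W).ncard - 2 →
      (S₀ \ W).ncard ≤ n →
      ∃ W', W ⊆ W' ∧ S₀ ⊆ W' ∧ (∀ x ∈ W', ∀ y ∈ W', COn G W' x y) ∧
        W'.ncard ≤ 2 * (S₀ ∩ W').ncard - 2 := by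
  intro n
  induction n with
  | zero =>
    intro W hne hconn hCC hcard hdiff
    have hempty : S₀ \ W = ∅ := by
      have := (Set.ncard_eq_zero (Set.toFinite _)).mp (Nat.le_zero.mp hdiff)
      exact this
    exact ⟨W, subset_rfl, Set.diff_eq_empty.mp hempty, hconn, hcard⟩
  | succ n ih =>
    intro W hne hconn hCC hcard hdiff
    by_cases hS : S₀ ⊆ W
    · exact ⟨W, subset_rfl, hS, hconn, hcard⟩
    obtain ⟨sstar, hsS, hsW⟩ := Set.not_subset.mp hS
    have hWpos : 1 ≤ W.ncard := (Set.ncard_pos (Set.toFinite _)).mpr hne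
    have hSW1 : 1 ≤ (S₀ ∩ W).ncard := by omega
    by_cases h1 : ∃ s ∈ S₀, s ∉ W ∧ ∃ w ∈ W, G.Adj w s
    · -- Case 1 : a vertex of S₀ outside W adjacent to W
      obtain ⟨s, hsS₀, hsnW, w, hwW, hadj⟩ := h1
      set D := comp G S₀ s with hD
      have hDS₀ : D ⊆ S₀ := comp_subset
      have hsD : s ∈ D := mem_comp_self hsS₀
      have hD2 : 2 ≤ D.ncard := two_le_comp hTD hsS₀
      have hDnW : ∀ x ∈ D, x ∉ W := by
        intro x hxD hxW
        exact hsnW (hCC x ⟨hDS₀ hxD, hxW⟩ (comp_symm_mem hxD))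
      set W' : Set V := W ∪ D with hW'
      have hbridge : COn G W' w s := by
        refine ⟨Walk.cons hadj Walk.nil, fun v hv => ?_⟩
        simp only [Walk.support_cons, Walk.support_nil, List.mem_cons, List.not_mem_nil,
          or_false] at hv
        rcases hv with rfl | rfl
        · exact Or.inl hwW
        · exact Or.inr hsD
      have hconn' : ∀ x ∈ W', ∀ y ∈ W', COn G W' x y :=
        glue2 hconn comp_conn hwW hsD hbridge
      have hCC' : ∀ t ∈ S₀ ∩ W', comp G S₀ t ⊆ W' := by
        rintro t ⟨htS, htW | htD⟩ y hy
        · exact Or.inl (hCC t ⟨htS, htW⟩ hy)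
        · exact Or.inr (comp_closed htD hy)
      have hdisj : Disjoint W D := Set.disjoint_right.mpr (fun x hx => hDnW x hx)
      have hW'card : W'.ncard = W.ncard + D.ncard :=
        Set.ncard_union_eq hdisj (Set.toFinite _) (Set.toFinite _)
      have hint : S₀ ∩ W' = (S₀ ∩ W) ∪ D := by
        rw [hW', Set.inter_union_distrib_left, Set.inter_eq_self_of_subset_right hDS₀]
      have hdisj2 : Disjoint (S₀ ∩ W) D :=
        Set.disjoint_right.mpr (fun x hx h => hDnW x hx h.2)
      have hintcard : (S₀ ∩ W').ncard = (S₀ ∩ W).ncard + D.ncard := by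
        rw [hint, Set.ncard_union_eq hdisj2 (Set.toFinite _) (Set.toFinite _)]
      have hcard' : W'.ncard ≤ 2 * (S₀ ∩ W').ncard - 2 := by omega
      have hprog : (S₀ \ W').ncard ≤ n := by
        have hsub : S₀ \ W' ⊆ S₀ \ W := Set.diff_subset_diff subset_rfl Set.subset_union_left
        have hss : S₀ \ W' ⊂ S₀ \ W := by
          rw [Set.ssubset_iff_of_subset hsub]
          exact ⟨s, ⟨hsS₀, hsnW⟩, fun h => h.2 (Or.inr hsD)⟩
        have := Set.ncard_lt_ncard hss (Set.toFinite _)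
        omega
      obtain ⟨W'', h1', h2', h3', h4'⟩ := ih W' ⟨w, Or.inl hwW⟩ hconn' hCC' hcard' hprog
      exact ⟨W'', Set.Subset.trans Set.subset_union_left h1', h2', h3', h4'⟩
    · -- Case 2 : no S₀-vertex outside W is adjacent to W
      push_neg at h1
      set R : Set V := W ∪ {v | ∃ w ∈ W, G.Adj w v} with hR
      have hsR : sstar ∉ R := by
        rintro (h | ⟨w, hw, hadj⟩)
        · exact hsW h
        · exact h1 sstar hsS hsW w hw hadj
      obtain ⟨w₀, hw₀W⟩ := hne
      obtain ⟨p⟩ := hG.preconnected w₀ sstar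
      obtain ⟨a, b, haR, hbR, hab⟩ := exists_boundary p (Or.inl hw₀W) hsR
      have haW : a ∉ W := fun h => hbR (Or.inr ⟨a, h, hab⟩)
      have haN : ∃ w ∈ W, G.Adj w a := by
        rcases haR with h | h
        · exact absurd h haW
        · exact h
      obtain ⟨wa, hwaW, hwaadj⟩ := haN
      have haS₀ : a ∉ S₀ := fun h => h1 a h haW wa hwaW hwaadj
      have hbW : b ∉ W := fun h => hbR (Or.inl h)
      have hbNW : ∀ w ∈ W, ¬ G.Adj w b := fun w hw hadj => hbR (Or.inr ⟨w, hw, hadj⟩)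
      -- conn of W ∪ {a}
      have hconnA : ∀ x ∈ W ∪ {a}, ∀ y ∈ W ∪ {a}, COn G (W ∪ {a}) x y := by
        refine glue2 hconn ?_ hwaW rfl ?_
        · rintro x rfl y rfl
          exact COn.refl (Set.mem_singleton _)
        · refine ⟨Walk.cons hwaadj Walk.nil, fun v hv => ?_⟩
          simp only [Walk.support_cons, Walk.support_nil, List.mem_cons, List.not_mem_nil,
            or_false] at hv
          rcases hv with rfl | rfl
          · exact Or.inl hwaW
          · exact Or.inr rfl
      by_cases hbS : b ∈ S₀
      · -- Case 2a
        set D := comp G S₀ b with hD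
        have hDS₀ : D ⊆ S₀ := comp_subset
        have hbD : b ∈ D := mem_comp_self hbS
        have hD2 : 2 ≤ D.ncard := two_le_comp hTD hbS
        have hDnW : ∀ x ∈ D, x ∉ W := by
          intro x hxD hxW
          exact hbW (hCC x ⟨hDS₀ hxD, hxW⟩ (comp_symm_mem hxD))
        set W' : Set V := (W ∪ {a}) ∪ D with hW'
        have hconn' : ∀ x ∈ W', ∀ y ∈ W', COn G W' x y := by
          refine glue2 hconnA comp_conn (Or.inr rfl) hbD ?_
          refine ⟨Walk.cons hab Walk.nil, fun v hv => ?_⟩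
          simp only [Walk.support_cons, Walk.support_nil, List.mem_cons, List.not_mem_nil,
            or_false] at hv
          rcases hv with rfl | rfl
          · exact Or.inl (Or.inr rfl)
          · exact Or.inr hbD
        have hCC' : ∀ t ∈ S₀ ∩ W', comp G S₀ t ⊆ W' := by
          rintro t ⟨htS, (htW | rfl) | htD⟩ y hy
          · exact Or.inl (Or.inl (hCC t ⟨htS, htW⟩ hy))
          · exact absurd htS haS₀
          · exact Or.inr (comp_closed htD hy)
        have hW'card : W'.ncard ≤ W.ncard + 1 + D.ncard := by
          calc W'.ncard ≤ (W ∪ {a}).ncard + D.ncard := Set.ncard_union_le _ _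
            _ ≤ (W.ncard + 1) + D.ncard := by
                have := Set.ncard_union_le W ({a} : Set V)
                simp only [Set.ncard_singleton] at this
                omega
        have hint : S₀ ∩ W' = (S₀ ∩ W) ∪ D := by
          apply Set.Subset.antisymm
          · rintro t ⟨htS, (htW | rfl) | htD⟩
            · exact Or.inl ⟨htS, htW⟩
            · exact absurd htS haS₀
            · exact Or.inr htD
          · rintro t (⟨htS, htW⟩ | htD)
            · exact ⟨htS, Or.inl (Or.inl htW)⟩
            · exact ⟨hDS₀ htD, Or.inr htD⟩
        have hdisj2 : Disjoint (S₀ ∩ W) D :=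
          Set.disjoint_right.mpr (fun x hx h => hDnW x hx h.2)
        have hintcard : (S₀ ∩ W').ncard = (S₀ ∩ W).ncard + D.ncard := by
          rw [hint, Set.ncard_union_eq hdisj2 (Set.toFinite _) (Set.toFinite _)]
        have hcard' : W'.ncard ≤ 2 * (S₀ ∩ W').ncard - 2 := by omega
        have hprog : (S₀ \ W').ncard ≤ n := by
          have hsub : S₀ \ W' ⊆ S₀ \ W := Set.diff_subset_diff subset_rfl
            (Set.Subset.trans Set.subset_union_left Set.subset_union_left)
          have hss : S₀ \ W' ⊂ S₀ \ W := by
            rw [Set.ssubset_iff_of_subset hsub]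
            exact ⟨b, ⟨hbS, hbW⟩, fun h => h.2 (Or.inr hbD)⟩
          have := Set.ncard_lt_ncard hss (Set.toFinite _)
          omega
        obtain ⟨W'', h1', h2', h3', h4'⟩ := ih W' ⟨wa, Or.inl (Or.inl hwaW)⟩
          hconn' hCC' hcard' hprog
        exact ⟨W'', Set.Subset.trans (Set.Subset.trans Set.subset_union_left
          Set.subset_union_left) h1', h2', h3', h4'⟩
      · -- Case 2b
        obtain ⟨sb, hsbS, hsbadj⟩ := hTD b
        have hsbW : sb ∉ W := fun h => hbNW sb h hsbadj.symm
        set D := comp G S₀ sb with hD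
        have hDS₀ : D ⊆ S₀ := comp_subset
        have hsbD : sb ∈ D := mem_comp_self hsbS
        have hD2 : 2 ≤ D.ncard := two_le_comp hTD hsbS
        have hDnW : ∀ x ∈ D, x ∉ W := by
          intro x hxD hxW
          exact hsbW (hCC x ⟨hDS₀ hxD, hxW⟩ (comp_symm_mem hxD))
        set W' : Set V := ((W ∪ {a}) ∪ {b}) ∪ D with hW'
        have hconnB : ∀ x ∈ (W ∪ {a}) ∪ {b}, ∀ y ∈ (W ∪ {a}) ∪ {b},
            COn G ((W ∪ {a}) ∪ {b}) x y := by
          refine glue2 hconnA ?_ (Or.inr rfl) rfl ?_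
          · rintro x rfl y rfl
            exact COn.refl (Set.mem_singleton _)
          · refine ⟨Walk.cons hab Walk.nil, fun v hv => ?_⟩
            simp only [Walk.support_cons, Walk.support_nil, List.mem_cons, List.not_mem_nil,
              or_false] at hv
            rcases hv with rfl | rfl
            · exact Or.inl (Or.inr rfl)
            · exact Or.inr rfl
        have hconn' : ∀ x ∈ W', ∀ y ∈ W', COn G W' x y := by
          refine glue2 hconnB comp_conn (Or.inr rfl) hsbD ?_
          refine ⟨Walk.cons hsbadj Walk.nil, fun v hv => ?_⟩
          simp only [Walk.support_cons, Walk.support_nil, List.mem_cons, List.not_mem_nil,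
            or_false] at hv
          rcases hv with rfl | rfl
          · exact Or.inl (Or.inr rfl)
          · exact Or.inr hsbD
        have hCC' : ∀ t ∈ S₀ ∩ W', comp G S₀ t ⊆ W' := by
          rintro t ⟨htS, ((htW | rfl) | rfl) | htD⟩ y hy
          · exact Or.inl (Or.inl (Or.inl (hCC t ⟨htS, htW⟩ hy)))
          · exact absurd htS haS₀
          · exact absurd htS hbS
          · exact Or.inr (comp_closed htD hy)
        have hW'card : W'.ncard ≤ W.ncard + 2 + D.ncard := by
          have e1 : W'.ncard ≤ ((W ∪ {a}) ∪ {b}).ncard + D.ncard := by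
            rw [hW']; exact Set.ncard_union_le _ _
          have e2 := Set.ncard_union_le (W ∪ {a}) ({b} : Set V)
          have e3 := Set.ncard_union_le W ({a} : Set V)
          simp only [Set.ncard_singleton] at e2 e3
          omega
        have hint : S₀ ∩ W' = (S₀ ∩ W) ∪ D := by
          apply Set.Subset.antisymm
          · rintro t ⟨htS, ((htW | rfl) | rfl) | htD⟩
            · exact Or.inl ⟨htS, htW⟩
            · exact absurd htS haS₀
            · exact absurd htS hbS
            · exact Or.inr htD
          · rintro t (⟨htS, htW⟩ | htD)
            · exact ⟨htS, Or.inl (Or.inl (Or.inl htW))⟩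
            · exact ⟨hDS₀ htD, Or.inr htD⟩
        have hdisj2 : Disjoint (S₀ ∩ W) D :=
          Set.disjoint_right.mpr (fun x hx h => hDnW x hx h.2)
        have hintcard : (S₀ ∩ W').ncard = (S₀ ∩ W).ncard + D.ncard := by
          rw [hint, Set.ncard_union_eq hdisj2 (Set.toFinite _) (Set.toFinite _)]
        have hcard' : W'.ncard ≤ 2 * (S₀ ∩ W').ncard - 2 := by omega
        have hprog : (S₀ \ W').ncard ≤ n := by
          have hsub : S₀ \ W' ⊆ S₀ \ W := Set.diff_subset_diff subset_rfl
            (Set.Subset.trans (Set.Subset.trans Set.subset_union_left Set.subset_union_left)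
              Set.subset_union_left)
          have hss : S₀ \ W' ⊂ S₀ \ W := by
            rw [Set.ssubset_iff_of_subset hsub]
            exact ⟨sb, ⟨hsbS, hsbW⟩, fun h => h.2 (Or.inr hsbD)⟩
          have := Set.ncard_lt_ncard hss (Set.toFinite _)
          omega
        obtain ⟨W'', h1', h2', h3', h4'⟩ := ih W'
          ⟨wa, Or.inl (Or.inl (Or.inl hwaW))⟩ hconn' hCC' hcard' hprog
        exact ⟨W'', Set.Subset.trans (Set.Subset.trans (Set.Subset.trans
          Set.subset_union_left Set.subset_union_left) Set.subset_union_left) h1',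
          h2', h3', h4'⟩

end TDRad

open TDRad in
theorem totalDomNum_ge_rad {V : Type*} [Fintype V]
    (G : SimpleGraph V) (hG : G.Connected) (hn : 2 ≤ Fintype.card V) :
    rad G ≤ totalDomNum G := by
  classical
  -- every vertex has a neighbor
  have hnbr : ∀ v : V, ∃ w : V, G.Adj v w := by
    intro v
    obtain ⟨w, hwne⟩ := Fintype.exists_ne_of_one_lt_card (by omega) v
    obtain ⟨p⟩ := hG.preconnected v w
    cases p with
    | nil => exact absurd rfl hwne
    | cons h q => exact ⟨_, h⟩
  have hne_td : {m | ∃ S : Set V, TotalDomSet G S ∧ S.ncard = m}.Nonempty := by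
    refine ⟨(Set.univ : Set V).ncard, Set.univ, fun v => ?_, rfl⟩
    obtain ⟨w, hw⟩ := hnbr v
    exact ⟨w, Set.mem_univ w, hw⟩
  obtain ⟨S₀, hS₀TD, hS₀card⟩ := Nat.sInf_mem hne_td
  have hTD' : ∀ v, ∃ s ∈ S₀, G.Adj v s := hS₀TD
  set k := totalDomNum G with hk
  have hS₀k : S₀.ncard = k := hS₀card
  have hV : Nonempty V := Fintype.card_pos_iff.mp (by omega)
  obtain ⟨v₀⟩ := hV
  obtain ⟨s₀, hs₀S, _⟩ := hTD' v₀
  -- k ≥ 2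
  obtain ⟨s₁, hs₁S, hadj01⟩ := hTD' s₀
  have hk2 : 2 ≤ k := by
    have hsub : ({s₀, s₁} : Set V) ⊆ S₀ := by rintro t (rfl | rfl) <;> assumption
    have := Set.ncard_le_ncard hsub (Set.toFinite _)
    rw [Set.ncard_pair hadj01.ne] at this
    omega
  -- initial connected piece
  have hW₀conn := comp_conn (G := G) (S₀ := S₀) (s := s₀)
  have hW₀CC : ∀ t ∈ S₀ ∩ comp G S₀ s₀, comp G S₀ t ⊆ comp G S₀ s₀ :=
    fun t ht y hy => comp_closed ht.2 hy
  have hW₀card : (comp G S₀ s₀).ncard ≤ 2 * (S₀ ∩ comp G S₀ s₀).ncard - 2 := by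
    rw [Set.inter_eq_self_of_subset_right (comp_subset (G := G))]
    have := two_le_comp hTD' hs₀S
    omega
  obtain ⟨W, hWsub, hS₀W, hWconn, hWcard⟩ := grow hG hTD' ((S₀ \ comp G S₀ s₀).ncard)
    (comp G S₀ s₀) ⟨s₀, mem_comp_self hs₀S⟩ hW₀conn hW₀CC hW₀card le_rfl
  have hWk : W.ncard ≤ 2 * k - 2 := by
    have h1 : (S₀ ∩ W).ncard ≤ S₀.ncard :=
      Set.ncard_le_ncard Set.inter_subset_left (Set.toFinite _)
    omega
  obtain ⟨x, hxW, hxbd⟩ := halfRad W.ncard W (Set.toFinite _) ⟨s₀, hS₀W hs₀S⟩ rfl hWconn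
  have hecc : _root_.eccent G x ≤ k := by
    apply Finset.sup_le
    intro w _
    obtain ⟨s, hsS, hsadj⟩ := hTD' w
    have h1 : G.dist x s ≤ k - 1 := by
      have ha := dist_le_dOn (hWconn x hxW s (hS₀W hsS))
      have hb := hxbd s (hS₀W hsS)
      omega
    have h2 : G.dist s w ≤ 1 := by
      have := SimpleGraph.dist_le (Walk.cons hsadj.symm Walk.nil : G.Walk s w)
      simpa using this
    have h3 : G.dist x w ≤ G.dist x s + G.dist s w := hG.dist_triangle
    omega
  have hrad : rad G ≤ _root_.eccent G x := Nat.sInf_le ⟨x, rfl⟩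
  omega
end

section
/- Let G be a connected graph, S ⊆ V(G), and suppose every vertex v of G satisfies d_G(v, S \ {v}) ≤ k. Then there exists a spanning tree T of G such that d_T(v, S \ {v}) = d_G(v, S \ {v}) for every vertex v of G. -/
open SimpleGraph

private lemma setDist_le' {V : Type*} {G : SimpleGraph V} {v w : V} {A : Set V} (hw : w ∈ A) :
    sInf {d | ∃ w ∈ A, G.dist v w = d} ≤ G.dist v w := Nat.sInf_le ⟨w, hw, rfl⟩

private lemma setDist_exists' {V : Type*} (G : SimpleGraph V) (v : V) {A : Set V}
    (hA : A.Nonempty) : ∃ w ∈ A, G.dist v w = sInf {d | ∃ w ∈ A, G.dist v w = d} := by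
  obtain ⟨w, hw⟩ := hA
  have : ({d | ∃ w ∈ A, G.dist v w = d} : Set ℕ).Nonempty := ⟨G.dist v w, w, hw, rfl⟩
  exact Nat.sInf_mem this

private lemma reach_pred {V : Type*} {H : SimpleGraph V} (P : V → Prop)
    (hP : ∀ u v, H.Adj u v → P u → P v) {x y : V} (h : H.Reachable x y) (hx : P x) : P y := by
  obtain ⟨w⟩ := h
  induction w with
  | nil => exact hx
  | cons h p ih => exact ih (hP _ _ h hx)

private lemma reach_sup_edge {V : Type*} {K : SimpleGraph V} {a b x y : V}
    (h : (K ⊔ fromEdgeSet {s(a, b)}).Reachable x y) :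
    K.Reachable x y ∨ (K.Reachable x a ∧ K.Reachable b y) ∨
      (K.Reachable x b ∧ K.Reachable a y) := by
  obtain ⟨w⟩ := h
  induction w with
  | nil => exact Or.inl (Reachable.refl _)
  | cons hadj p ih =>
    rw [sup_adj] at hadj
    rcases hadj with hK | hE
    · rcases ih with h1 | ⟨h1, h2⟩ | ⟨h1, h2⟩
      · exact Or.inl (hK.reachable.trans h1)
      · exact Or.inr (Or.inl ⟨hK.reachable.trans h1, h2⟩)
      · exact Or.inr (Or.inr ⟨hK.reachable.trans h1, h2⟩)
    · rw [fromEdgeSet_adj, Set.mem_singleton_iff, Sym2.eq_iff] at hE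
      obtain ⟨⟨rfl, rfl⟩ | ⟨rfl, rfl⟩, hne⟩ := hE
      · rcases ih with h1 | ⟨h1, h2⟩ | ⟨h1, h2⟩
        · exact Or.inr (Or.inl ⟨Reachable.refl _, h1⟩)
        · exact Or.inl (h1.symm.trans h2)
        · exact Or.inl h2
      · rcases ih with h1 | ⟨h1, h2⟩ | ⟨h1, h2⟩
        · exact Or.inr (Or.inr ⟨Reachable.refl _, h1⟩)
        · exact Or.inl h2
        · exact Or.inl (h1.symm.trans h2)

private lemma acyclic_sup_edge {V : Type*} {H : SimpleGraph V} {a b : V}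
    (hH : H.IsAcyclic) (hab : ¬ H.Reachable a b) :
    (H ⊔ fromEdgeSet {s(a, b)}).IsAcyclic := by
  rw [isAcyclic_iff_forall_adj_isBridge]
  intro v w hvw
  have hvw' := hvw
  rw [sup_adj] at hvw'
  rcases hvw' with hK | hE
  · have hne : s(v, w) ≠ s(a, b) := by
      intro h
      rcases Sym2.eq_iff.mp h with ⟨rfl, rfl⟩ | ⟨rfl, rfl⟩
      · exact hab hK.reachable
      · exact hab hK.symm.reachable
    have hbr := isAcyclic_iff_forall_adj_isBridge.mp hH hK
    rw [isBridge_iff] at hbr ⊢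
    intro hr
    have hle : ((H ⊔ fromEdgeSet {s(a, b)}) \ fromEdgeSet {s(v, w)}) ≤
        (H \ fromEdgeSet {s(v, w)}) ⊔ fromEdgeSet {s(a, b)} := by
      intro x y hxy
      rw [sdiff_adj, sup_adj] at hxy
      rw [sup_adj, sdiff_adj]
      tauto
    rcases reach_sup_edge (hr.mono hle) with h1 | ⟨h1, h2⟩ | ⟨h1, h2⟩
    · exact hbr h1
    · exact hab ((h1.mono sdiff_le).symm.trans (hK.reachable.trans (h2.mono sdiff_le).symm))
    · exact hab ((h2.mono sdiff_le).trans (hK.symm.reachable.trans (h1.mono sdiff_le)))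
  · have hE' := hE
    rw [fromEdgeSet_adj, Set.mem_singleton_iff] at hE'
    obtain ⟨heq, hvne⟩ := hE'
    rw [isBridge_iff]
    intro hr
    have hle : ((H ⊔ fromEdgeSet {s(a, b)}) \ fromEdgeSet {s(v, w)}) ≤ H := by
      intro x y hxy
      rw [sdiff_adj, sup_adj] at hxy
      obtain ⟨hA | hA, hB⟩ := hxy
      · exact hA
      · rw [fromEdgeSet_adj, Set.mem_singleton_iff] at hA
        exact absurd ((fromEdgeSet_adj _).mpr
          ⟨by rw [Set.mem_singleton_iff, heq]; exact hA.1, hA.2⟩) hB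
    have hreach : H.Reachable v w := hr.mono hle
    rcases Sym2.eq_iff.mp heq with ⟨rfl, rfl⟩ | ⟨rfl, rfl⟩
    · exact hab hreach
    · exact hab hreach.symm

private lemma dist_getVert_left {V : Type*} {G : SimpleGraph V} (hc : G.Connected) {x y : V}
    (q : G.Walk x y) : ∀ i, G.dist x (q.getVert i) ≤ i := by
  intro i
  induction i with
  | zero => simp [SimpleGraph.Walk.getVert_zero]
  | succ n ih =>
    by_cases h : n < q.length
    · have hadj := q.adj_getVert_succ h
      have h1 : G.dist (q.getVert n) (q.getVert (n + 1)) ≤ 1 := by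
        simpa using dist_le (SimpleGraph.Walk.cons hadj SimpleGraph.Walk.nil)
      have h2 := hc.dist_triangle (u := x) (v := q.getVert n) (w := q.getVert (n + 1))
      omega
    · rw [q.getVert_of_length_le (by omega)]
      have := dist_le q
      omega

private lemma dist_getVert_right {V : Type*} {G : SimpleGraph V} {x y : V}
    (q : G.Walk x y) : ∀ i, G.dist (q.getVert i) y ≤ q.length - i := by
  induction q with
  | nil => intro i; rw [SimpleGraph.Walk.getVert_of_length_le _ (Nat.zero_le i)]; simp
  | cons h p ih =>
    intro i
    cases i with
    | zero => simpa using dist_le (SimpleGraph.Walk.cons h p)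
    | succ n =>
      rw [SimpleGraph.Walk.getVert_cons_succ]
      have h1 := ih n
      have hl : (SimpleGraph.Walk.cons h p).length = p.length + 1 :=
        SimpleGraph.Walk.length_cons _ _
      omega


/-- The distance from a vertex `v` to a set `A` of vertices of `G`. -/
noncomputable def setDist {V : Type*} (G : SimpleGraph V) (v : V) (A : Set V) : ℕ :=
  sInf {d | ∃ w ∈ A, G.dist v w = d}

theorem exists_distance_preserving_spanning_tree {V : Type*} [Fintype V]
    (k : ℕ) (hk : 1 ≤ k) (G : SimpleGraph V) (hG : G.Connected)
    (hn : 2 ≤ Fintype.card V) (S : Set V)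
    (hS : ∀ v : V, ∃ w ∈ S, w ≠ v ∧ G.dist v w ≤ k) :
    ∃ T : SimpleGraph V, T ≤ G ∧ T.IsTree ∧
      ∀ v : V, setDist T v (S \ {v}) = setDist G v (S \ {v}) := by
  classical
  have hne : Nonempty V := by
    rw [← Fintype.card_pos_iff]; omega
  have hSet_le : ∀ (H : SimpleGraph V) (v w : V) (A : Set V), w ∈ A →
      setDist H v A ≤ H.dist v w := fun H v w A hw => Nat.sInf_le ⟨w, hw, rfl⟩
  have hSet_ex : ∀ (H : SimpleGraph V) (v : V) (A : Set V), A.Nonempty →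
      ∃ w ∈ A, H.dist v w = setDist H v A := by
    intro H v A hA
    obtain ⟨w, hw⟩ := hA
    have : ({d | ∃ w ∈ A, H.dist v w = d} : Set ℕ).Nonempty := ⟨H.dist v w, w, hw, rfl⟩
    exact Nat.sInf_mem this
  have hSne : S.Nonempty := by
    obtain ⟨v⟩ := hne
    obtain ⟨w, hw, -⟩ := hS v
    exact ⟨w, hw⟩
  have hAne : ∀ v : V, (S \ {v} : Set V).Nonempty := by
    intro v
    obtain ⟨w, h1, h2, -⟩ := hS v
    exact ⟨w, h1, h2⟩
  obtain ⟨D, hD⟩ : ∃ D : V → ℕ, D = fun v => setDist G v S := ⟨_, rfl⟩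
  have hD' : ∀ v, D v = setDist G v S := fun v => by rw [hD]
  have hD0 : ∀ v, D v = 0 ↔ v ∈ S := by
    intro v
    constructor
    · intro h
      obtain ⟨w, hwS, hwd⟩ := hSet_ex G v S hSne
      rw [← hD', h] at hwd
      rwa [hG.dist_eq_zero_iff.mp hwd]
    · intro hv
      have h1 := hSet_le G v v S hv
      rw [← hD'] at h1
      simp only [SimpleGraph.dist_self] at h1
      omega
  -- parent function
  have hpex : ∀ v : V, ∃ u : V, (v ∈ S → u = v) ∧ (v ∉ S → G.Adj v u ∧ D u + 1 = D v) := by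
    intro v
    by_cases hv : v ∈ S
    · exact ⟨v, fun _ => rfl, fun h => absurd hv h⟩
    · obtain ⟨w, hwS, hwd⟩ := hSet_ex G v S hSne
      have hd0 : G.dist v w ≠ 0 := by
        intro h
        exact hv ((hG.dist_eq_zero_iff.mp h) ▸ hwS)
      obtain ⟨q, hq⟩ := (hG v w).exists_walk_length_eq_dist
      have hlen : 0 < q.length := by omega
      refine ⟨q.getVert 1, fun h => absurd h hv, fun _ => ⟨?_, ?_⟩⟩
      · have := q.adj_getVert_succ hlen
        rwa [SimpleGraph.Walk.getVert_zero] at this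
      · have h1 : G.dist (q.getVert 1) w ≤ q.length - 1 := dist_getVert_right q 1
        have h2 : D (q.getVert 1) ≤ G.dist (q.getVert 1) w := by
          rw [hD']; exact hSet_le G _ w S hwS
        have h3 : D v ≤ D (q.getVert 1) + 1 := by
          obtain ⟨w1, hw1S, hw1d⟩ := hSet_ex G (q.getVert 1) S hSne
          have h4 : G.dist v w1 ≤ G.dist v (q.getVert 1) + G.dist (q.getVert 1) w1 :=
            hG.dist_triangle
          have h5 : G.dist v (q.getVert 1) ≤ 1 := dist_getVert_left hG q 1
          have h6 : D v ≤ G.dist v w1 := by rw [hD']; exact hSet_le G v w1 S hw1S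
          rw [← hD'] at hw1d
          omega
        have h7 : D v = G.dist v w := by rw [hD']; exact hwd.symm
        omega

  choose p hp1 hp2 using hpex
  have hpadj : ∀ v, v ∉ S → G.Adj v (p v) := fun v h => (hp2 v h).1
  have hpD : ∀ v, v ∉ S → D (p v) + 1 = D v := fun v h => (hp2 v h).2
  have hpne : ∀ v, v ∉ S → v ≠ p v := by
    intro v h heq
    have := hpD v h
    rw [← heq] at this
    omega
  have hDmono : ∀ v, D (p v) ≤ D v := by
    intro v
    by_cases h : v ∈ S
    · rw [hp1 v h]
    · have := hpD v h; omega
  have hDit : ∀ n v, D (p^[n] v) ≤ D v := by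
    intro n
    induction n with
    | zero => intro v; simp
    | succ m ih =>
      intro v
      rw [Function.iterate_succ_apply]
      exact le_trans (ih (p v)) (hDmono v)
  obtain ⟨F, hF⟩ : ∃ F : SimpleGraph V,
      F = fromEdgeSet {e | ∃ v, v ∉ S ∧ e = s(v, p v)} := ⟨_, rfl⟩
  have hFG : F ≤ G := by
    intro x y hxy
    rw [hF, fromEdgeSet_adj] at hxy
    obtain ⟨⟨v, hv, he⟩, -⟩ := hxy
    rcases Sym2.eq_iff.mp he with ⟨h1, h2⟩ | ⟨h1, h2⟩
    · rw [h1, h2]; exact hpadj v hv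
    · rw [h1, h2]; exact (hpadj v hv).symm
  have hiter : ∀ n v, D v = n → (p^[n] v ∈ S ∧ ∃ w : F.Walk v (p^[n] v), w.length = n) := by
    intro n
    induction n with
    | zero =>
      intro v hv
      rw [Function.iterate_zero_apply]
      exact ⟨(hD0 v).mp hv, ⟨SimpleGraph.Walk.nil, rfl⟩⟩
    | succ m ih =>
      intro v hv
      have hvS : v ∉ S := by
        intro h
        have h0 := (hD0 v).mpr h
        omega
      have hDp : D (p v) = m := by have := hpD v hvS; omega
      obtain ⟨hmem, wlk, hwlk⟩ := ih (p v) hDp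
      rw [Function.iterate_succ_apply]
      refine ⟨hmem, SimpleGraph.Walk.cons ?_ wlk, ?_⟩
      · rw [hF]
        exact (fromEdgeSet_adj _).mpr ⟨⟨v, hvS, rfl⟩, hpne v hvS⟩
      · simp [SimpleGraph.Walk.length_cons, hwlk]
  obtain ⟨r, hr⟩ : ∃ r : V → V, r = fun v => p^[D v] v := ⟨_, rfl⟩
  have hrS : ∀ v, r v ∈ S := fun v => by rw [hr]; exact (hiter (D v) v rfl).1
  have hrW : ∀ v, ∃ w : F.Walk v (r v), w.length = D v := by
    intro v
    rw [hr]
    exact (hiter (D v) v rfl).2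
  have hrfix : ∀ v, v ∈ S → r v = v := by
    intro v hv
    rw [hr]
    show p^[D v] v = v
    rw [(hD0 v).mpr hv]
    rfl
  have hrp : ∀ v, v ∉ S → r (p v) = r v := by
    intro v hv
    rw [hr]
    show p^[D (p v)] (p v) = p^[D v] v
    conv_rhs => rw [← hpD v hv]
    rw [Function.iterate_succ_apply]
  have hrF : ∀ x y, F.Adj x y → r x = r y := by
    intro x y hxy
    rw [hF, fromEdgeSet_adj] at hxy
    obtain ⟨⟨v, hv, he⟩, -⟩ := hxy
    rcases Sym2.eq_iff.mp he with ⟨h1, h2⟩ | ⟨h1, h2⟩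
    · rw [h1, h2]; exact (hrp _ hv).symm
    · rw [h1, h2]; exact hrp _ hv
  obtain ⟨f, hfdef⟩ : ∃ f : V → ℕ, f = fun v => setDist G v (S \ {v}) := ⟨_, rfl⟩
  have hf' : ∀ v, f v = setDist G v (S \ {v}) := fun v => by rw [hfdef]
  have hfD : ∀ v, v ∉ S → f v = D v := by
    intro v hv
    apply le_antisymm
    · obtain ⟨w, hwS, hwd⟩ := hSet_ex G v S hSne
      have hwv : w ≠ v := fun h => hv (h ▸ hwS)
      calc f v ≤ G.dist v w := by rw [hf']; exact hSet_le G v w _ ⟨hwS, hwv⟩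
        _ = D v := by rw [hD']; exact hwd
    · obtain ⟨w, hwA, hwd⟩ := hSet_ex G v (S \ {v}) (hAne v)
      calc D v ≤ G.dist v w := by rw [hD']; exact hSet_le G v w S hwA.1
        _ = f v := by rw [hf']; exact hwd
  -- crossing edges
  have hcross : ∀ s0 : V, ∃ x y : V, s0 ∈ S →
      (G.Adj x y ∧ r x = s0 ∧ r y ≠ s0 ∧ D x + 1 + D y ≤ f s0) := by
    intro s0
    by_cases hs : s0 ∈ S
    swap
    · exact ⟨s0, s0, fun h => absurd h hs⟩
    obtain ⟨w, hwA, hwd⟩ := hSet_ex G s0 (S \ {s0}) (hAne s0)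
    obtain ⟨hwS, hwne⟩ := hwA
    have hwne' : w ≠ s0 := hwne
    obtain ⟨q, hq⟩ := (hG s0 w).exists_walk_length_eq_dist
    have hP : ∃ i, r (q.getVert i) ≠ s0 := by
      refine ⟨q.length, ?_⟩
      rw [SimpleGraph.Walk.getVert_length, hrfix w hwS]
      exact hwne'
    have hspec : r (q.getVert (Nat.find hP)) ≠ s0 := Nat.find_spec hP
    have hj0 : Nat.find hP ≠ 0 := by
      intro h
      rw [h, SimpleGraph.Walk.getVert_zero, hrfix s0 hs] at hspec
      exact hspec rfl
    have hjle : Nat.find hP ≤ q.length := Nat.find_min' hP (by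
      rw [SimpleGraph.Walk.getVert_length, hrfix w hwS]; exact hwne')
    have hprev : r (q.getVert (Nat.find hP - 1)) = s0 := by
      by_contra h
      have := Nat.find_min' hP h
      omega
    have hadj : G.Adj (q.getVert (Nat.find hP - 1)) (q.getVert (Nat.find hP)) := by
      have h1 : Nat.find hP - 1 < q.length := by omega
      have h2 := q.adj_getVert_succ h1
      have h3 : Nat.find hP - 1 + 1 = Nat.find hP := by omega
      rwa [h3] at h2
    refine ⟨q.getVert (Nat.find hP - 1), q.getVert (Nat.find hP), fun _ =>
      ⟨hadj, hprev, hspec, ?_⟩⟩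
    have hx1 : D (q.getVert (Nat.find hP - 1)) ≤ G.dist (q.getVert (Nat.find hP - 1)) s0 := by
      rw [hD']; exact hSet_le G _ s0 S hs
    have hx2 : G.dist (q.getVert (Nat.find hP - 1)) s0 = G.dist s0 (q.getVert (Nat.find hP - 1)) :=
      SimpleGraph.dist_comm
    have hx3 : G.dist s0 (q.getVert (Nat.find hP - 1)) ≤ Nat.find hP - 1 :=
      dist_getVert_left hG q _
    have hy1 : D (q.getVert (Nat.find hP)) ≤ G.dist (q.getVert (Nat.find hP)) w := by
      rw [hD']; exact hSet_le G _ w S hwS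
    have hy2 : G.dist (q.getVert (Nat.find hP)) w ≤ q.length - Nat.find hP :=
      dist_getVert_right q _
    have hfs : G.dist s0 w = f s0 := by rw [hf']; exact hwd
    omega
  choose eA eB hAB using hcross
  obtain ⟨cost, hcostdef⟩ : ∃ c : V → ℕ, c = fun s0 => D (eA s0) + 1 + D (eB s0) := ⟨_, rfl⟩
  have hcost' : ∀ s0, cost s0 = D (eA s0) + 1 + D (eB s0) := fun s0 => by rw [hcostdef]
  have hABadj : ∀ s0, s0 ∈ S → G.Adj (eA s0) (eB s0) := fun s0 hs => (hAB s0 hs).1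
  have hABrA : ∀ s0, s0 ∈ S → r (eA s0) = s0 := fun s0 hs => (hAB s0 hs).2.1
  have hABrB : ∀ s0, s0 ∈ S → r (eB s0) ≠ s0 := fun s0 hs => (hAB s0 hs).2.2.1
  have hABle : ∀ s0, s0 ∈ S → cost s0 ≤ f s0 := by
    intro s0 hs
    rw [hcost']
    exact (hAB s0 hs).2.2.2
  -- Kruskal fold
  obtain ⟨addE, haddE⟩ : ∃ ae : SimpleGraph V → V × V → SimpleGraph V,
      ae = fun H e => if H.Reachable e.1 e.2 then H else H ⊔ fromEdgeSet {s(e.1, e.2)} :=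
    ⟨_, rfl⟩
  have haddE' : ∀ H e, addE H e =
      if H.Reachable e.1 e.2 then H else H ⊔ fromEdgeSet {s(e.1, e.2)} := by
    intro H e; rw [haddE]
  have hstep_le : ∀ H e, H ≤ addE H e := by
    intro H e
    rw [haddE']
    split_ifs
    · exact le_refl _
    · exact le_sup_left
  have hfold_le : ∀ (L : List (V × V)) (H : SimpleGraph V), H ≤ L.foldl addE H := by
    intro L
    induction L with
    | nil => intro H; simp
    | cons e L ih =>
      intro H
      rw [List.foldl_cons]
      exact le_trans (hstep_le H e) (ih _)
  have hfold_upper : ∀ (L : List (V × V)) (H K : SimpleGraph V), H ≤ K →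
      (∀ e ∈ L, fromEdgeSet {s(e.1, e.2)} ≤ K) → L.foldl addE H ≤ K := by
    intro L
    induction L with
    | nil => intro H K h _; simpa using h
    | cons e L ih =>
      intro H K hHK hL
      rw [List.foldl_cons]
      refine ih _ _ ?_ (fun e' he' => hL e' (List.mem_cons_of_mem _ he'))
      rw [haddE']
      split_ifs
      · exact hHK
      · exact sup_le hHK (hL e (List.mem_cons_self))
  have hfold_acyc : ∀ (L : List (V × V)) (H : SimpleGraph V), H.IsAcyclic →
      (L.foldl addE H).IsAcyclic := by
    intro L
    induction L with
    | nil => intro H h; simpa using h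
    | cons e L ih =>
      intro H h
      rw [List.foldl_cons]
      refine ih _ ?_
      rw [haddE']
      split_ifs with hre
      · exact h
      · exact acyclic_sup_edge h hre
  have hfold_reach : ∀ (L : List (V × V)) (H : SimpleGraph V) (e : V × V), e ∈ L →
      (L.foldl addE H).Reachable e.1 e.2 := by
    intro L
    induction L with
    | nil => intro H e he; simp at he
    | cons a L ih =>
      intro H e he
      rw [List.foldl_cons]
      rcases List.mem_cons.mp he with rfl | hmem
      · have hreach : (addE H e).Reachable e.1 e.2 := by
          rw [haddE']
          split_ifs with hre
          · exact hre
          · have hne2 : e.1 ≠ e.2 := fun h => hre (h ▸ Reachable.refl _)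
            exact ((sup_adj _ _ _ _).mpr (Or.inr ((fromEdgeSet_adj _).mpr
              ⟨Set.mem_singleton _, hne2⟩))).reachable
        exact hreach.mono (hfold_le L _)
      · exact ih _ _ hmem
  have hfold_adj : ∀ (L₁ L₂ : List (V × V)) (e : V × V) (H : SimpleGraph V),
      ¬ (L₁.foldl addE H).Reachable e.1 e.2 →
      ((L₁ ++ e :: L₂).foldl addE H).Adj e.1 e.2 := by
    intro L₁ L₂ e H hnr
    rw [List.foldl_append, List.foldl_cons]
    have hne2 : e.1 ≠ e.2 := fun h => hnr (h ▸ Reachable.refl _)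
    have h1 : (addE (L₁.foldl addE H) e).Adj e.1 e.2 := by
      rw [haddE', if_neg hnr]
      exact (sup_adj _ _ _ _).mpr (Or.inr ((fromEdgeSet_adj _).mpr
          ⟨Set.mem_singleton _, hne2⟩))
    exact (hfold_le L₂ _) h1
  -- the lists
  obtain ⟨NC, hNC⟩ : ∃ N : ℕ, N = (Finset.univ.sup cost) + 1 := ⟨_, rfl⟩
  have hNCgt : ∀ s0 : V, cost s0 < NC := by
    intro s0
    rw [hNC]
    exact Nat.lt_succ_of_le (Finset.le_sup (Finset.mem_univ s0))
  obtain ⟨LF, hLF⟩ : ∃ L : List (V × V),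
      L = (Finset.univ.filter (fun v : V => v ∉ S)).toList.map (fun v => (v, p v)) := ⟨_, rfl⟩
  obtain ⟨layer, hlayer⟩ : ∃ fl : ℕ → List (V × V), fl = fun n =>
      (Finset.univ.filter (fun t : V => t ∈ S ∧ cost t = n)).toList.map
        (fun t => (eA t, eB t)) := ⟨_, rfl⟩
  obtain ⟨LC, hLC⟩ : ∃ L : List (V × V), L = (List.range NC).flatMap layer := ⟨_, rfl⟩
  obtain ⟨LG, hLG⟩ : ∃ L : List (V × V),
      L = (Finset.univ.filter (fun e : V × V => G.Adj e.1 e.2)).toList := ⟨_, rfl⟩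
  obtain ⟨L, hL⟩ : ∃ L : List (V × V), L = LF ++ LC ++ LG := ⟨_, rfl⟩
  obtain ⟨T, hT⟩ : ∃ T : SimpleGraph V, T = L.foldl addE ⊥ := ⟨_, rfl⟩
  have hLadj : ∀ e ∈ L, G.Adj e.1 e.2 := by
    intro e he
    rw [hL] at he
    rcases List.mem_append.mp he with he' | heG
    · rcases List.mem_append.mp he' with heF | heC
      · rw [hLF] at heF
        obtain ⟨v, hv, rfl⟩ := List.mem_map.mp heF
        have hv' : v ∉ S := by
          simpa using (Finset.mem_filter.mp (Finset.mem_toList.mp hv)).2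
        exact hpadj v hv'
      · rw [hLC] at heC
        obtain ⟨n, -, hmem⟩ := List.mem_flatMap.mp heC
        rw [hlayer] at hmem
        obtain ⟨t, ht, rfl⟩ := List.mem_map.mp hmem
        have ht' := (Finset.mem_filter.mp (Finset.mem_toList.mp ht)).2
        exact hABadj t ht'.1
    · rw [hLG] at heG
      exact (Finset.mem_filter.mp (Finset.mem_toList.mp heG)).2
  have hTG : T ≤ G := by
    rw [hT]
    refine hfold_upper L ⊥ G bot_le ?_
    intro e he x y hxy
    rw [fromEdgeSet_adj, Set.mem_singleton_iff] at hxy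
    obtain ⟨hmem, hne2⟩ := hxy
    rcases Sym2.eq_iff.mp hmem with ⟨rfl, rfl⟩ | ⟨rfl, rfl⟩
    · exact hLadj e he
    · exact (hLadj e he).symm
  have hTacyc : T.IsAcyclic := by
    rw [hT]
    refine hfold_acyc L ⊥ ?_
    intro v c hc
    cases c with
    | nil => simp [SimpleGraph.Walk.isCycle_def] at hc
    | cons h pp => exact h.elim
  have hTpre : ∀ x y, G.Adj x y → T.Reachable x y := by
    intro x y h
    rw [hT]
    refine hfold_reach L ⊥ (x, y) ?_
    rw [hL]
    refine List.mem_append.mpr (Or.inr ?_)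
    rw [hLG]
    exact Finset.mem_toList.mpr (Finset.mem_filter.mpr ⟨Finset.mem_univ _, h⟩)
  have hTconn : T.Connected := by
    haveI := hne
    have hpre' : T.Preconnected := by
      intro x y
      obtain ⟨w⟩ := hG x y
      induction w with
      | nil => exact Reachable.refl _
      | cons h pp ih => exact (hTpre _ _ h).trans ih
    exact Connected.mk hpre'
  have hFT : F ≤ T := by
    suffices h : ∀ v, v ∉ S → T.Adj v (p v) by
      intro x y hxy
      rw [hF, fromEdgeSet_adj] at hxy
      obtain ⟨⟨v, hv, he⟩, -⟩ := hxy
      rcases Sym2.eq_iff.mp he with ⟨h1, h2⟩ | ⟨h1, h2⟩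
      · rw [h1, h2]; exact h v hv
      · rw [h1, h2]; exact (h v hv).symm
    intro v hv
    have hvmem : v ∈ (Finset.univ.filter (fun v : V => v ∉ S)).toList :=
      Finset.mem_toList.mpr (Finset.mem_filter.mpr ⟨Finset.mem_univ _, hv⟩)
    obtain ⟨l1, l2, hsplit⟩ := List.append_of_mem hvmem
    have hnd := Finset.nodup_toList (Finset.univ.filter (fun v : V => v ∉ S))
    rw [hsplit] at hnd
    have hvl1 : v ∉ l1 := fun hmem =>
      (List.disjoint_of_nodup_append hnd) hmem (List.mem_cons_self)
    have hLdec : L = (l1.map (fun u => (u, p u))) ++ (v, p v) ::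
        ((l2.map (fun u => (u, p u))) ++ LC ++ LG) := by
      rw [hL, hLF, hsplit]
      simp [List.map_append, List.append_assoc]
    have hup : (List.foldl addE ⊥ (l1.map (fun u => (u, p u)))) ≤
        fromEdgeSet {e | ∃ u, u ∉ S ∧ u ≠ v ∧ e = s(u, p u)} := by
      refine hfold_upper _ _ _ bot_le ?_
      intro e he
      obtain ⟨u, hu, rfl⟩ := List.mem_map.mp he
      have huS : u ∉ S := by
        have hu2 : u ∈ (Finset.univ.filter (fun v : V => v ∉ S)).toList := by
          rw [hsplit]
          exact List.mem_append.mpr (Or.inl hu)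
        simpa using (Finset.mem_filter.mp (Finset.mem_toList.mp hu2)).2
      have hune : u ≠ v := fun h => hvl1 (h ▸ hu)
      refine fromEdgeSet_mono ?_
      intro e' he'
      rw [Set.mem_singleton_iff] at he'
      exact ⟨u, huS, hune, he'⟩
    have hnr : ¬ (List.foldl addE ⊥ (l1.map (fun u => (u, p u)))).Reachable v (p v) := by
      intro hre
      have hre' := hre.mono hup
      have hQ : ∃ n, p^[n] (p v) = v := by
        refine reach_pred (fun z => ∃ n, p^[n] z = v) ?_ hre' ⟨0, rfl⟩
        intro z1 z2 hadj hQ1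
        rw [fromEdgeSet_adj] at hadj
        obtain ⟨⟨u, huS, hune, he⟩, -⟩ := hadj
        rcases Sym2.eq_iff.mp he with ⟨h1, h2⟩ | ⟨h1, h2⟩
        · obtain ⟨n, hn⟩ := hQ1
          rw [h1] at hn
          rw [h2]
          cases n with
          | zero => exact absurd (by simpa using hn) hune
          | succ m =>
            refine ⟨m, ?_⟩
            rw [← Function.iterate_succ_apply]
            exact hn
        · obtain ⟨n, hn⟩ := hQ1
          rw [h1] at hn
          rw [h2]
          refine ⟨n + 1, ?_⟩
          rw [Function.iterate_succ_apply]
          exact hn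
      obtain ⟨n, hn⟩ := hQ
      have h1 := hDit n (p v)
      rw [hn] at h1
      have h2 := hpD v hv
      omega
    have hadd := hfold_adj (l1.map (fun u => (u, p u))) ((l2.map (fun u => (u, p u))) ++ LC ++ LG) (v, p v) ⊥ hnr
    rw [hT, hLdec]
    exact hadd
  -- satisfaction for vertices of S
  have hsatS : ∀ s0, s0 ∈ S → ∃ u, u ∈ S ∧ u ≠ s0 ∧ ∃ x y, T.Adj x y ∧
      ((r x = s0 ∧ r y = u) ∨ (r x = u ∧ r y = s0)) ∧ D x + 1 + D y ≤ f s0 := by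
    intro s0 hs
    have hmemr : cost s0 ∈ List.range NC := List.mem_range.mpr (hNCgt s0)
    obtain ⟨Lpre, Lpost, hrsplit⟩ := List.append_of_mem hmemr
    have hpw := List.pairwise_lt_range (n := NC)
    rw [hrsplit] at hpw
    have hpre_lt : ∀ n ∈ Lpre, n < cost s0 := by
      have h1 := (List.pairwise_append.mp hpw).2.2
      exact fun n hn => h1 n hn (cost s0) (List.mem_cons_self)
    have hsmem : s0 ∈ (Finset.univ.filter (fun t : V => t ∈ S ∧ cost t = cost s0)).toList :=
      Finset.mem_toList.mpr (Finset.mem_filter.mpr ⟨Finset.mem_univ _, hs, rfl⟩)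
    obtain ⟨m1, m2, hmsplit⟩ := List.append_of_mem hsmem
    have hmnd := Finset.nodup_toList (Finset.univ.filter (fun t : V => t ∈ S ∧ cost t = cost s0))
    rw [hmsplit] at hmnd
    have hsm1 : s0 ∉ m1 := fun hmem =>
      (List.disjoint_of_nodup_append hmnd) hmem (List.mem_cons_self)
    obtain ⟨L₁, hL₁⟩ : ∃ X : List (V × V),
        X = LF ++ (Lpre.flatMap layer ++ m1.map (fun t => (eA t, eB t))) := ⟨_, rfl⟩
    have hLdec : L = L₁ ++ (eA s0, eB s0) ::
        ((m2.map (fun t => (eA t, eB t)) ++ Lpost.flatMap layer) ++ LG) := by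
      rw [hL, hLC, hrsplit, hL₁, List.flatMap_append, List.flatMap_cons]
      rw [hlayer]
      simp only []
      rw [hmsplit, List.map_append, List.map_cons]
      simp [List.append_assoc]
    have hH₁T : (L₁.foldl addE ⊥) ≤ T := by
      rw [hT, hLdec, List.foldl_append]
      exact hfold_le _ _
    have hKup : (L₁.foldl addE ⊥) ≤ F ⊔ fromEdgeSet
        {e | ∃ t, t ∈ S ∧ t ≠ s0 ∧ cost t ≤ cost s0 ∧ e = s(eA t, eB t)} := by
      rw [hL₁]
      refine hfold_upper _ _ _ bot_le ?_
      intro e he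
      rcases List.mem_append.mp he with heF | he2
      · rw [hLF] at heF
        obtain ⟨u, hu, rfl⟩ := List.mem_map.mp heF
        have huS : u ∉ S := by
          simpa using (Finset.mem_filter.mp (Finset.mem_toList.mp hu)).2
        refine le_trans ?_ le_sup_left
        rw [hF]
        refine fromEdgeSet_mono ?_
        intro e' he'
        rw [Set.mem_singleton_iff] at he'
        exact ⟨u, huS, he'⟩
      · rcases List.mem_append.mp he2 with heC | heM
        · obtain ⟨n, hn, hmem⟩ := List.mem_flatMap.mp heC
          have hnlt := hpre_lt n hn
          rw [hlayer] at hmem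
          obtain ⟨t, ht, rfl⟩ := List.mem_map.mp hmem
          have ht' := (Finset.mem_filter.mp (Finset.mem_toList.mp ht)).2
          refine le_trans ?_ le_sup_right
          refine fromEdgeSet_mono ?_
          intro e' he'
          rw [Set.mem_singleton_iff] at he'
          refine ⟨t, ht'.1, ?_, ?_, he'⟩
          · intro h
            rw [h] at ht'
            omega
          · have := ht'.2
            omega
        · obtain ⟨t, ht, rfl⟩ := List.mem_map.mp heM
          have htL : t ∈ (Finset.univ.filter
              (fun t : V => t ∈ S ∧ cost t = cost s0)).toList := by
            rw [hmsplit]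
            exact List.mem_append.mpr (Or.inl ht)
          have ht' := (Finset.mem_filter.mp (Finset.mem_toList.mp htL)).2
          have htne : t ≠ s0 := fun h => hsm1 (h ▸ ht)
          refine le_trans (fromEdgeSet_mono ?_) le_sup_right
          intro e' he'
          rw [Set.mem_singleton_iff] at he'
          exact ⟨t, ht'.1, htne, le_of_eq ht'.2, he'⟩
    by_cases hre : (L₁.foldl addE ⊥).Reachable (eA s0) (eB s0)
    · by_cases hex : ∃ t, t ∈ S ∧ t ≠ s0 ∧ cost t ≤ cost s0 ∧
          T.Adj (eA t) (eB t) ∧ r (eB t) = s0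
      · obtain ⟨t, htS, htne, htle, htadj, htr⟩ := hex
        refine ⟨t, htS, htne, eA t, eB t, htadj, Or.inr ⟨hABrA t htS, htr⟩, ?_⟩
        have h1 := hcost' t
        have h2 := hABle s0 hs
        omega
      · exfalso
        have hinv : ∀ z1 z2, (L₁.foldl addE ⊥).Adj z1 z2 → r z1 = s0 → r z2 = s0 := by
          intro z1 z2 hadj hz1
          have hK := hKup hadj
          have hTadj : T.Adj z1 z2 := hH₁T hadj
          rw [sup_adj] at hK
          rcases hK with hFa | hEa
          · rw [← hrF z1 z2 hFa]
            exact hz1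
          · rw [fromEdgeSet_adj] at hEa
            obtain ⟨⟨t, htS, htne, htle, he⟩, -⟩ := hEa
            exfalso
            rcases Sym2.eq_iff.mp he with ⟨h1, h2⟩ | ⟨h1, h2⟩
            · rw [h1, hABrA t htS] at hz1
              exact htne hz1
            · refine hex ⟨t, htS, htne, htle, ?_, ?_⟩
              · rw [h1, h2] at hTadj
                exact hTadj.symm
              · rw [← h1]
                exact hz1
        have hcon : r (eB s0) = s0 :=
          reach_pred (fun z => r z = s0) hinv hre (hABrA s0 hs)
        exact hABrB s0 hs hcon
    · have hTadj : T.Adj (eA s0) (eB s0) := by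
        have hadd := hfold_adj L₁ ((m2.map (fun t => (eA t, eB t)) ++ Lpost.flatMap layer) ++ LG) (eA s0, eB s0) ⊥ hre
        rw [hT, hLdec]
        exact hadd
      refine ⟨r (eB s0), hrS _, hABrB s0 hs, eA s0, eB s0, hTadj,
        Or.inl ⟨hABrA s0 hs, rfl⟩, ?_⟩
      have h1 := hcost' s0
      have h2 := hABle s0 hs
      omega
  -- walks realizing the distances in T
  have hwalk : ∀ v, ∃ u, (u ∈ S ∧ u ≠ v) ∧ ∃ w : T.Walk v u, w.length ≤ f v := by
    intro v
    by_cases hv : v ∈ S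
    · obtain ⟨u, huS, hune, x, y, hadj, hor, hbound⟩ := hsatS v hv
      obtain ⟨w1, hw1⟩ := hrW x
      obtain ⟨w2, hw2⟩ := hrW y
      have hl1 : (w1.mapLe hFT).length = D x := by
        rw [SimpleGraph.Walk.length_map]; exact hw1
      have hl2 : (w2.mapLe hFT).length = D y := by
        rw [SimpleGraph.Walk.length_map]; exact hw2
      rcases hor with ⟨hx, hy⟩ | ⟨hx, hy⟩
      · refine ⟨u, ⟨huS, hune⟩,
          (((w1.mapLe hFT).reverse.append (SimpleGraph.Walk.cons hadj
            (w2.mapLe hFT))).copy hx hy), ?_⟩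
        rw [SimpleGraph.Walk.length_copy, SimpleGraph.Walk.length_append,
          SimpleGraph.Walk.length_reverse, SimpleGraph.Walk.length_cons, hl1, hl2]
        omega
      · refine ⟨u, ⟨huS, hune⟩,
          (((w2.mapLe hFT).reverse.append (SimpleGraph.Walk.cons hadj.symm
            (w1.mapLe hFT))).copy hy hx), ?_⟩
        rw [SimpleGraph.Walk.length_copy, SimpleGraph.Walk.length_append,
          SimpleGraph.Walk.length_reverse, SimpleGraph.Walk.length_cons, hl1, hl2]
        omega
    · obtain ⟨w1, hw1⟩ := hrW v
      have hrvS := hrS v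
      have hrvne : r v ≠ v := fun h => hv (h ▸ hrvS)
      refine ⟨r v, ⟨hrvS, hrvne⟩, w1.mapLe hFT, ?_⟩
      have hlen : (w1.mapLe hFT).length = D v := by
        rw [SimpleGraph.Walk.length_map]; exact hw1
      rw [hlen, hfD v hv]
  refine ⟨T, hTG, ⟨hTconn, hTacyc⟩, ?_⟩
  intro v
  apply le_antisymm
  · obtain ⟨u, ⟨huS, hune⟩, w, hwlen⟩ := hwalk v
    have h1 : setDist T v (S \ {v}) ≤ T.dist v u := hSet_le T v u _ ⟨huS, hune⟩
    have h2 : T.dist v u ≤ w.length := dist_le w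
    have h3 : f v = setDist G v (S \ {v}) := hf' v
    omega
  · obtain ⟨u, huA, hud⟩ := hSet_ex T v (S \ {v}) (hAne v)
    have hreach : T.Reachable v u := hTconn.preconnected v u
    obtain ⟨q, hq⟩ := hreach.exists_walk_length_eq_dist
    have h1 : G.dist v u ≤ T.dist v u := by
      calc G.dist v u ≤ (q.mapLe hTG).length := dist_le _
        _ = q.length := SimpleGraph.Walk.length_map _ _
        _ = T.dist v u := hq
    have h2 : setDist G v (S \ {v}) ≤ G.dist v u := hSet_le G v u _ huA
    omega
end
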